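/- arXiv:math/9701223 — 5 statements merged into one kernel-verified Lean document; each statement's English description precedes it below -/
import Mathlib

section
/- Suppose the Green's function satisfies g(x,x) ≤ K for all x ∈ S. Then almost surely, S_∞ < ∞ implies S̃_∞ < ∞, where S̃_n = Σ_{i=0}^n q(X_i) and S_n = Σ_{i=0}^n q(X_i) 1[τ(X_i)=i]. Consequently the annealed field is trapping if and only if the quenched field is trapping. -/
open MeasureTheory ENNReal Classical

structure MC (S : Type*) [MeasurableSpace S] where
  p : S → S → ℝ≥0∞
  P : S → Measure (ℕ → S)
  prob : ∀ x, IsProbabilityMeasure (P x)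
  start : ∀ x, P x {ω | ω 0 = x} = 1
  markov : ∀ x n (y : ℕ → S),
    P x {ω | ∀ i ≤ n + 1, ω i = y i}
      = P x {ω | ∀ i ≤ n, ω i = y i} * p (y n) (y (n + 1))

/-- The Green's function `g (x, y) = ∑_{n ≥ 0} P_x (X_n = y)`. -/
noncomputable def MC.green {S : Type*} [MeasurableSpace S] (c : MC S) (x y : S) : ℝ≥0∞ :=
  ∑' n : ℕ, c.P x {ω | ω n = y}

/-- `S̃_∞ ω = ∑_{i=0}^∞ q (X_i)` along the path `ω`, valued in `ℝ≥0∞`. -/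
noncomputable def Stilde {S : Type*} (q : S → ℝ) (ω : ℕ → S) : ℝ≥0∞ :=
  ∑' i : ℕ, ENNReal.ofReal (q (ω i))

/-- `S_∞ ω = ∑_{i=0}^∞ q (X_i) ⋅ 1[τ (X_i) = i]` along the path `ω`: only first
visits to each site contribute. -/
noncomputable def Squench {S : Type*} (q : S → ℝ) (ω : ℕ → S) : ℝ≥0∞ :=
  ∑' i : ℕ, if ∀ j < i, ω j ≠ ω i then ENNReal.ofReal (q (ω i)) else 0

section Aux
variable {S : Type*} [MeasurableSpace S] [MeasurableSingletonClass S] [Countable S]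

def cyl (y : ℕ → S) (n : ℕ) : Set (ℕ → S) := {ω | ∀ i ≤ n, ω i = y i}

lemma measurable_coord (n : ℕ) (z : S) : MeasurableSet {ω : ℕ → S | ω n = z} := by
  have := (measurable_pi_apply (X := fun _ : ℕ => S) n) (measurableSet_singleton z)
  simpa [Set.preimage, Set.mem_singleton_iff] using this

lemma measurable_eq_coord (a b : ℕ) : MeasurableSet {ω : ℕ → S | ω a = ω b} := by
  have : {ω : ℕ → S | ω a = ω b} = ⋃ s : S, ({ω : ℕ → S | ω a = s} ∩ {ω | ω b = s}) := by
    ext ω; simp only [Set.mem_iUnion, Set.mem_inter_iff, Set.mem_setOf_eq]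
    constructor
    · intro h; exact ⟨ω b, h, rfl⟩
    · rintro ⟨s, h1, h2⟩; rw [h1, h2]
  rw [this]
  exact MeasurableSet.iUnion fun s => (measurable_coord a s).inter (measurable_coord b s)

lemma cyl_meas (y : ℕ → S) (n : ℕ) : MeasurableSet (cyl y n) := by
  have : cyl y n = ⋂ i ∈ Finset.range (n+1), {ω : ℕ → S | ω i = y i} := by
    ext ω; simp [cyl, Nat.lt_succ_iff]
  rw [this]
  exact Finset.measurableSet_biInter _ (fun i _ => measurable_coord i (y i))


set_option linter.unusedSectionVars false

variable (c : MC S)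

/-- n-step transition function -/
noncomputable def MC.r (c : MC S) : ℕ → S → S → ℝ≥0∞
  | 0, x, z => if x = z then 1 else 0
  | (m+1), x, z => ∑' y : S, c.p x y * MC.r c m y z

lemma P_cyl_zero (x : S) (y : ℕ → S) (h : y 0 ≠ x) : c.P x (cyl y 0) = 0 := by
  have h1 : c.P x {ω : ℕ → S | ω 0 = x}ᶜ = 0 := by
    have := c.prob x
    have hm := measurable_coord (S := S) 0 x
    rw [measure_compl hm (measure_ne_top _ _), c.start x, measure_univ]
    simp
  refine measure_mono_null ?_ h1
  intro ω hw
  simp only [cyl, Set.mem_setOf_eq] at hw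
  have := hw 0 le_rfl
  simp only [Set.mem_compl_iff, Set.mem_setOf_eq]
  rw [this]; exact h

/-- Lemma A: strong-Markov-type computation on cylinders. -/
lemma P_cyl_inter (x z : S) : ∀ (m n : ℕ) (y : ℕ → S),
    c.P x (cyl y n ∩ {ω | ω (n + m) = z}) = c.P x (cyl y n) * c.r m (y n) z := by
  intro m
  induction m with
  | zero =>
    intro n y
    by_cases h : y n = z
    · have : cyl y n ∩ {ω : ℕ → S | ω (n + 0) = z} = cyl y n := by
        ext ω; simp only [Set.mem_inter_iff, Set.mem_setOf_eq, Nat.add_zero, and_iff_left_iff_imp]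
        intro hw; rw [hw n le_rfl, h]
      rw [this, MC.r]
      simp [h]
    · have : cyl y n ∩ {ω : ℕ → S | ω (n + 0) = z} = ∅ := by
        ext ω; simp only [Set.mem_inter_iff, Set.mem_setOf_eq, Nat.add_zero, Set.mem_empty_iff_false,
          iff_false, not_and]
        intro hw hz; exact h ((hw n le_rfl).symm.trans hz)
      rw [this, MC.r]
      simp [h]
  | succ m ih =>
    intro n y
    -- decompose over the value at time n+1
    have hdec : cyl y n ∩ {ω : ℕ → S | ω (n + (m+1)) = z}
        = ⋃ s : S, (cyl (Function.update y (n+1) s) (n+1) ∩ {ω : ℕ → S | ω ((n+1) + m) = z}) := by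
      ext ω
      simp only [Set.mem_inter_iff, Set.mem_iUnion, cyl, Set.mem_setOf_eq]
      constructor
      · rintro ⟨h1, h2⟩
        refine ⟨ω (n+1), ⟨?_, ?_⟩⟩
        · intro i hi
          rcases Nat.lt_succ_iff_lt_or_eq.mp (Nat.lt_succ_of_le hi) with hi' | hi'
          · rw [Function.update_of_ne (by omega), h1 i (by omega)]
          · subst hi'; rw [Function.update_self]
        · show ω (n + 1 + m) = z
          rw [show n + 1 + m = n + (m+1) by omega]; exact h2
      · rintro ⟨s, h1, h2⟩
        refine ⟨fun i hi => ?_, ?_⟩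
        · have := h1 i (by omega)
          rwa [Function.update_of_ne (by omega)] at this
        · show ω (n + (m+1)) = z
          rw [show n + (m+1) = n + 1 + m by omega]; exact h2
    rw [hdec]
    rw [measure_iUnion ?_ ?_]
    · have hterm : ∀ s : S,
          c.P x (cyl (Function.update y (n+1) s) (n+1) ∩ {ω : ℕ → S | ω ((n+1) + m) = z})
          = c.P x (cyl y n) * (c.p (y n) s * c.r m s z) := by
        intro s
        rw [ih (n+1) (Function.update y (n+1) s)]
        have hmk := c.markov x n (Function.update y (n+1) s)
        have hceq : cyl (Function.update y (n+1) s) n = cyl y n := by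
          ext ω; simp only [cyl, Set.mem_setOf_eq]
          constructor <;> intro h i hi
          · have := h i hi; rwa [Function.update_of_ne (by omega)] at this
          · rw [Function.update_of_ne (by omega)]; exact h i hi
        have : c.P x (cyl (Function.update y (n+1) s) (n+1))
            = c.P x (cyl y n) * c.p (y n) s := by
          have := hmk
          simp only [show (cyl (Function.update y (n+1) s) (n+1) : Set (ℕ → S))
            = {ω | ∀ i ≤ n + 1, ω i = Function.update y (n+1) s i} from rfl] at *
          rw [show ({ω : ℕ → S | ∀ i ≤ n, ω i = Function.update y (n+1) s i}) =
            cyl (Function.update y (n+1) s) n from rfl] at this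
          rw [this, hceq, Function.update_self, Function.update_of_ne (by omega)]
        rw [Function.update_self, this, mul_assoc]
      simp only [hterm]
      rw [ENNReal.tsum_mul_left]
      rfl
    · intro s t hst
      simp only [Function.onFun, Set.disjoint_left]
      intro ω hw hw'
      apply hst
      have h1 := hw.1 (n+1) le_rfl
      have h2 := hw'.1 (n+1) le_rfl
      rw [Function.update_self] at h1 h2
      rw [← h1, ← h2]
    · intro s
      exact ((cyl_meas _ _).inter (measurable_coord _ z))

/-- Lemma B: coordinate distribution is given by `r`. -/
lemma P_coord (x z : S) (m : ℕ) : c.P x {ω | ω m = z} = c.r m x z := by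
  have hB := measurable_coord (S := S) 0 x
  have hA : c.P x {ω : ℕ → S | ω m = z}
      = c.P x ({ω : ℕ → S | ω m = z} ∩ {ω | ω 0 = x})
        + c.P x ({ω : ℕ → S | ω m = z} \ {ω | ω 0 = x}) :=
    (measure_inter_add_diff _ hB).symm
  have hnull : c.P x ({ω : ℕ → S | ω m = z} \ {ω | ω 0 = x}) = 0 := by
    have := c.prob x
    have hc : c.P x ({ω : ℕ → S | ω 0 = x}ᶜ) = 0 := by
      rw [measure_compl hB (measure_ne_top _ _), c.start x, measure_univ]
      simp
    exact measure_mono_null (fun ω hw => hw.2) hc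
  have hcylx : ({ω : ℕ → S | ω m = z} ∩ {ω | ω 0 = x}) = cyl (fun _ => x) 0 ∩ {ω | ω (0 + m) = z} := by
    ext ω
    simp only [Set.mem_inter_iff, Set.mem_setOf_eq, cyl, Nat.zero_add]
    constructor
    · rintro ⟨h1, h2⟩; exact ⟨fun i hi => by rw [Nat.le_zero.mp hi]; exact h2, h1⟩
    · rintro ⟨h1, h2⟩; exact ⟨h2, h1 0 le_rfl⟩
  rw [hA, hnull, add_zero, hcylx, P_cyl_inter]
  have : c.P x (cyl (fun _ => x) 0) = 1 := by
    have : cyl (fun _ : ℕ => (x : S)) 0 = {ω : ℕ → S | ω 0 = x} := by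
      ext ω; simp only [cyl, Set.mem_setOf_eq]
      exact ⟨fun h => h 0 le_rfl, fun h i hi => by rw [Nat.le_zero.mp hi]; exact h⟩
    rw [this, c.start]
  rw [this, one_mul]

lemma green_eq (z : S) : c.green z z = ∑' m : ℕ, c.r m z z := by
  unfold MC.green
  exact tsum_congr fun m => P_coord c z z m


/-- Embed a finite word into an infinite path. -/
def emb (t : ℕ) (g : Fin (t+1) → S) : ℕ → S :=
  fun i => if h : i ≤ t then g ⟨i, Nat.lt_succ_of_le h⟩ else g ⟨t, Nat.lt_succ_self t⟩

lemma emb_agree (t : ℕ) (g : Fin (t+1) → S) (i : ℕ) (hi : i ≤ t) :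
    emb t g i = g ⟨i, Nat.lt_succ_of_le hi⟩ := by
  simp [emb, hi]

lemma E_decomp (t : ℕ) (E : Set (ℕ → S))
    (hdet : ∀ ω ω' : ℕ → S, (∀ i ≤ t, ω i = ω' i) → ω ∈ E → ω' ∈ E) :
    E = ⋃ g : {g : Fin (t+1) → S // emb t g ∈ E}, cyl (emb t g.1) t := by
  ext ω
  simp only [Set.mem_iUnion]
  constructor
  · intro hw
    refine ⟨⟨fun i => ω i.1, ?_⟩, ?_⟩
    · exact hdet ω _ (fun i hi => (emb_agree t (fun j : Fin (t+1) => ω j.1) i hi).symm) hw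
    · intro i hi
      exact (emb_agree t (fun j : Fin (t+1) => ω j.1) i hi).symm
  · rintro ⟨⟨g, hg⟩, hc⟩
    exact hdet (emb t g) ω (fun i hi => (hc i hi).symm) hg

lemma E_disjoint (t : ℕ) (E : Set (ℕ → S)) :
    Pairwise (Function.onFun Disjoint
      (fun g : {g : Fin (t+1) → S // emb t g ∈ E} => cyl (emb t g.1) t)) := by
  intro g g' hgg'
  simp only [Function.onFun, Set.disjoint_left]
  intro ω hw hw'
  apply hgg'
  apply Subtype.ext
  funext i
  have h1 := hw i.1 (Nat.lt_succ_iff.mp i.2)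
  have h2 := hw' i.1 (Nat.lt_succ_iff.mp i.2)
  rw [emb_agree t _ i.1 (Nat.lt_succ_iff.mp i.2)] at h1 h2
  have : g.1 ⟨i.1, i.2⟩ = g'.1 ⟨i.1, i.2⟩ := by rw [← h1, ← h2]
  simpa using this

lemma E_meas (t : ℕ) (E : Set (ℕ → S))
    (hdet : ∀ ω ω' : ℕ → S, (∀ i ≤ t, ω i = ω' i) → ω ∈ E → ω' ∈ E) :
    MeasurableSet E := by
  rw [E_decomp t E hdet]
  exact MeasurableSet.iUnion fun g => cyl_meas _ _

lemma P_det_inter (x z : S) (t : ℕ) (E : Set (ℕ → S))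
    (hdet : ∀ ω ω' : ℕ → S, (∀ i ≤ t, ω i = ω' i) → ω ∈ E → ω' ∈ E)
    (hz : ∀ ω ∈ E, ω t = z) (m : ℕ) :
    c.P x (E ∩ {ω | ω (t + m) = z}) = c.P x E * c.r m z z := by
  have hrep := E_decomp t E hdet
  have hint : E ∩ {ω : ℕ → S | ω (t + m) = z}
      = ⋃ g : {g : Fin (t+1) → S // emb t g ∈ E}, (cyl (emb t g.1) t ∩ {ω | ω (t + m) = z}) := by
    conv_lhs => rw [hrep]
    exact Set.iUnion_inter _ _
  rw [hint, measure_iUnion ?_ ?_]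
  · have hterm : ∀ g : {g : Fin (t+1) → S // emb t g ∈ E},
        c.P x (cyl (emb t g.1) t ∩ {ω | ω (t + m) = z})
          = c.P x (cyl (emb t g.1) t) * c.r m z z := by
      intro g
      rw [P_cyl_inter]
      congr 2
      rw [emb_agree t _ t le_rfl]
      have := hz _ g.2
      rw [emb_agree t _ t le_rfl] at this
      exact this
    simp only [hterm]
    rw [ENNReal.tsum_mul_right]
    congr 1
    have h2 := measure_iUnion (μ := c.P x) (E_disjoint t E) (fun g : {g : Fin (t+1) → S // emb t g ∈ E} => cyl_meas (emb t g.1) t)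
    rw [← hrep] at h2
    exact h2.symm
  · intro g g' hgg'
    have := E_disjoint t E hgg'
    exact this.mono (Set.inter_subset_left) (Set.inter_subset_left)
  · intro g
    exact (cyl_meas _ _).inter (measurable_coord _ z)


noncomputable def SqPartial (q : S → ℝ) (t : ℕ) (ω : ℕ → S) : ℝ≥0∞ :=
  ∑ j ∈ Finset.range (t+1), if ∀ k < j, ω k ≠ ω j then ENNReal.ofReal (q (ω j)) else 0

def Bset (q : S → ℝ) (M : ℕ) (z : S) (t : ℕ) : Set (ℕ → S) :=
  {ω | ω t = z ∧ (∀ j < t, ω j ≠ z) ∧ SqPartial q t ω ≤ (M : ℝ≥0∞)}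

lemma SqPartial_congr (q : S → ℝ) (t : ℕ) (ω ω' : ℕ → S) (h : ∀ i ≤ t, ω i = ω' i) :
    SqPartial q t ω = SqPartial q t ω' := by
  unfold SqPartial
  refine Finset.sum_congr rfl fun j hj => ?_
  rw [Finset.mem_range, Nat.lt_succ_iff] at hj
  have hj' : ω j = ω' j := h j hj
  have hcond : (∀ k < j, ω k ≠ ω j) ↔ (∀ k < j, ω' k ≠ ω' j) := by
    constructor <;> intro hc k hk
    · rw [← h k (le_trans hk.le hj), ← hj']; exact hc k hk
    · rw [h k (le_trans hk.le hj), hj']; exact hc k hk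
  by_cases hcnd : ∀ k < j, ω k ≠ ω j
  · rw [if_pos hcnd, if_pos (hcond.mp hcnd), hj']
  · rw [if_neg hcnd, if_neg (fun hc => hcnd (hcond.mpr hc))]

lemma Bset_det (q : S → ℝ) (M : ℕ) (z : S) (t : ℕ) :
    ∀ ω ω' : ℕ → S, (∀ i ≤ t, ω i = ω' i) → ω ∈ Bset q M z t → ω' ∈ Bset q M z t := by
  intro ω ω' h hw
  obtain ⟨h1, h2, h3⟩ := hw
  refine ⟨by rw [← h t le_rfl]; exact h1, ?_, ?_⟩
  · intro j hj
    rw [← h j hj.le]; exact h2 j hj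
  · rw [← SqPartial_congr q t ω ω' h]; exact h3

lemma Bset_meas (q : S → ℝ) (M : ℕ) (z : S) (t : ℕ) :
    MeasurableSet (Bset q M z t) :=
  E_meas t _ (Bset_det q M z t)

lemma SqPartial_le_Squench (q : S → ℝ) (t : ℕ) (ω : ℕ → S) :
    SqPartial q t ω ≤ Squench q ω :=
  ENNReal.sum_le_tsum (Finset.range (t+1))

lemma meas_first (i : ℕ) : MeasurableSet {ω : ℕ → S | ∀ j < i, ω j ≠ ω i} := by
  have : {ω : ℕ → S | ∀ j < i, ω j ≠ ω i}
      = ⋂ j ∈ Finset.range i, ({ω : ℕ → S | ω j = ω i})ᶜ := by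
    ext ω; simp [Finset.mem_range]
  rw [this]
  exact Finset.measurableSet_biInter _ (fun j _ => (measurable_eq_coord j i).compl)

lemma meas_qcoord (q : S → ℝ) (i : ℕ) :
    Measurable (fun ω : ℕ → S => ENNReal.ofReal (q (ω i))) :=
  ENNReal.measurable_ofReal.comp ((measurable_of_countable q).comp (measurable_pi_apply i))

lemma meas_Stilde (q : S → ℝ) : Measurable (Stilde q) :=
  Measurable.ennreal_tsum (fun i => meas_qcoord q i)

lemma meas_Squench_term (q : S → ℝ) (i : ℕ) :
    Measurable (fun ω : ℕ → S => if ∀ j < i, ω j ≠ ω i then ENNReal.ofReal (q (ω i)) else 0) :=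
  Measurable.ite (meas_first i) (meas_qcoord q i) measurable_const

lemma meas_Squench (q : S → ℝ) : Measurable (Squench q) :=
  Measurable.ennreal_tsum (fun i => meas_Squench_term q i)


/-- first hitting time of the site `ω i`. -/
noncomputable def tau (ω : ℕ → S) (i : ℕ) : ℕ := Nat.find (⟨i, rfl⟩ : ∃ j, ω j = ω i)

lemma tau_spec (ω : ℕ → S) (i : ℕ) : ω (tau ω i) = ω i := Nat.find_spec (⟨i, rfl⟩ : ∃ j, ω j = ω i)

lemma tau_le (ω : ℕ → S) (i : ℕ) : tau ω i ≤ i := Nat.find_le rfl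

lemma tau_min (ω : ℕ → S) (i : ℕ) : ∀ j < tau ω i, ω j ≠ ω i :=
  fun j hj => Nat.find_min _ hj

/-- Pathwise domination of the indicator-weighted `Stilde` by triple-indexed indicators. -/
lemma step1 (q : S → ℝ) (M : ℕ) (ω : ℕ → S) :
    Set.indicator {ω' : ℕ → S | Squench q ω' ≤ (M : ℝ≥0∞)} (Stilde q) ω
    ≤ ∑' pr : S × ℕ × ℕ,
        Set.indicator (Bset q M pr.1 pr.2.1 ∩ {ω' : ℕ → S | ω' (pr.2.1 + pr.2.2) = pr.1})
          (fun _ => ENNReal.ofReal (q pr.1)) ω := by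
  by_cases hω : Squench q ω ≤ (M : ℝ≥0∞)
  · have hmem0 : ω ∈ {ω' : ℕ → S | Squench q ω' ≤ (M : ℝ≥0∞)} := hω
    rw [Set.indicator_of_mem hmem0]
    set F : S × ℕ × ℕ → ℝ≥0∞ := fun pr =>
      Set.indicator (Bset q M pr.1 pr.2.1 ∩ {ω' : ℕ → S | ω' (pr.2.1 + pr.2.2) = pr.1})
        (fun _ => ENNReal.ofReal (q pr.1)) ω with hF
    set ι : ℕ → S × ℕ × ℕ := fun i => (ω i, tau ω i, i - tau ω i) with hι
    have hinj : Function.Injective ι := by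
      intro i i' h
      have h2 : tau ω i = tau ω i' := congrArg (fun p => p.2.1) h
      have h3 : i - tau ω i = i' - tau ω i' := congrArg (fun p => p.2.2) h
      have := tau_le ω i
      have := tau_le ω i'
      omega
    have hterm : ∀ i : ℕ, ENNReal.ofReal (q (ω i)) = F (ι i) := by
      intro i
      rw [hF]
      have hmem : ω ∈ Bset q M (ω i) (tau ω i)
          ∩ {ω' : ℕ → S | ω' (tau ω i + (i - tau ω i)) = ω i} := by
        constructor
        · exact ⟨tau_spec ω i, tau_min ω i,
            le_trans (SqPartial_le_Squench q _ ω) hω⟩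
        · show ω (tau ω i + (i - tau ω i)) = ω i
          rw [Nat.add_sub_cancel' (tau_le ω i)]
      exact (Set.indicator_of_mem hmem (fun _ => ENNReal.ofReal (q (ω i)))).symm
    calc Stilde q ω = ∑' i : ℕ, F (ι i) := tsum_congr hterm
      _ ≤ _ := ENNReal.tsum_comp_le_tsum_of_injective hinj F
  · have hmem0 : ω ∉ {ω' : ℕ → S | Squench q ω' ≤ (M : ℝ≥0∞)} := hω
    rw [Set.indicator_of_notMem hmem0]
    exact zero_le

/-- Pathwise bound `H ω ≤ M`. -/
lemma step3 (q : S → ℝ) (M : ℕ) (ω : ℕ → S) :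
    (∑' pr : S × ℕ, Set.indicator (Bset q M pr.1 pr.2)
      (fun _ => ENNReal.ofReal (q pr.1)) ω) ≤ (M : ℝ≥0∞) := by
  rw [ENNReal.tsum_eq_iSup_sum]
  refine iSup_le fun F => ?_
  classical
  set h : S × ℕ → ℝ≥0∞ := fun p =>
    Set.indicator (Bset q M p.1 p.2) (fun _ => ENNReal.ofReal (q p.1)) ω with hh
  set F' := F.filter (fun p => ω ∈ Bset q M p.1 p.2) with hF'
  have hsum : ∑ p ∈ F, h p = ∑ p ∈ F', ENNReal.ofReal (q p.1) := by
    rw [hF', Finset.sum_filter]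
    refine Finset.sum_congr rfl fun p hp => ?_
    by_cases hm : ω ∈ Bset q M p.1 p.2
    · rw [hh]; simp [Set.indicator_of_mem hm, hm]
    · rw [hh]; simp [Set.indicator_of_notMem hm, hm]
  rw [hsum]
  rcases F'.eq_empty_or_nonempty with he | hne
  · rw [he]; simp
  · set T := F'.image Prod.snd with hT
    have hTne : T.Nonempty := hne.image _
    set tm := T.max' hTne with htm
    obtain ⟨pstar, hpstar, hpt⟩ := Finset.mem_image.mp (T.max'_mem hTne)
    have hpstarB : ω ∈ Bset q M pstar.1 pstar.2 := (Finset.mem_filter.mp hpstar).2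
    have hBmem : ∀ p ∈ F', ω ∈ Bset q M p.1 p.2 := fun p hp => (Finset.mem_filter.mp hp).2
    have hinj : ∀ p ∈ F', ∀ p' ∈ F', p.2 = p'.2 → p = p' := by
      intro p hp p' hp' h2
      have hB := hBmem p hp
      have hB' := hBmem p' hp'
      have h1 : p.1 = p'.1 := by rw [← hB.1, ← hB'.1, h2]
      exact Prod.ext h1 h2
    have himg : ∑ t ∈ T, ENNReal.ofReal (q (ω t)) = ∑ p ∈ F', ENNReal.ofReal (q (ω p.2)) := by
      rw [hT]
      exact Finset.sum_image hinj
    have hval : ∀ p ∈ F', ENNReal.ofReal (q p.1) = ENNReal.ofReal (q (ω p.2)) := by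
      intro p hp
      rw [(hBmem p hp).1]
    calc ∑ p ∈ F', ENNReal.ofReal (q p.1)
        = ∑ p ∈ F', ENNReal.ofReal (q (ω p.2)) := Finset.sum_congr rfl hval
      _ = ∑ t ∈ T, ENNReal.ofReal (q (ω t)) := himg.symm
      _ = ∑ t ∈ T, (if ∀ k < t, ω k ≠ ω t then ENNReal.ofReal (q (ω t)) else 0) := by
          refine Finset.sum_congr rfl fun t ht => ?_
          obtain ⟨p, hp, hpt'⟩ := Finset.mem_image.mp ht
          have hB := hBmem p hp
          have hfv : ∀ k < t, ω k ≠ ω t := by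
            intro k hk
            rw [← hpt'] at hk ⊢
            rw [hB.1]
            exact hB.2.1 k hk
          rw [if_pos hfv]
      _ ≤ ∑ t ∈ Finset.range (tm+1), (if ∀ k < t, ω k ≠ ω t then ENNReal.ofReal (q (ω t)) else 0) := by
          refine Finset.sum_le_sum_of_subset fun t ht => ?_
          rw [Finset.mem_range, Nat.lt_succ_iff]
          exact T.le_max' t ht
      _ = SqPartial q tm ω := rfl
      _ ≤ (M : ℝ≥0∞) := by
          have := hpstarB.2.2
          rwa [hpt] at this

/-- The main integral bound. -/
lemma main_bound (q : S → ℝ) (K : ℝ≥0∞) (hg : ∀ x, c.green x x ≤ K) (x₀ : S) (M : ℕ) :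
    ∫⁻ ω, Set.indicator {ω' : ℕ → S | Squench q ω' ≤ (M : ℝ≥0∞)} (Stilde q) ω ∂(c.P x₀)
      ≤ K * M := by
  have hBz : ∀ z t, ∀ ω' ∈ Bset q M z t, ω' t = z := fun z t ω' hw => hw.1
  calc ∫⁻ ω, Set.indicator {ω' : ℕ → S | Squench q ω' ≤ (M : ℝ≥0∞)} (Stilde q) ω ∂(c.P x₀)
      ≤ ∫⁻ ω, ∑' pr : S × ℕ × ℕ,
          Set.indicator (Bset q M pr.1 pr.2.1 ∩ {ω' : ℕ → S | ω' (pr.2.1 + pr.2.2) = pr.1})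
            (fun _ => ENNReal.ofReal (q pr.1)) ω ∂(c.P x₀) :=
        lintegral_mono (step1 q M)
    _ = ∑' pr : S × ℕ × ℕ, ENNReal.ofReal (q pr.1)
          * c.P x₀ (Bset q M pr.1 pr.2.1 ∩ {ω' : ℕ → S | ω' (pr.2.1 + pr.2.2) = pr.1}) := by
        rw [lintegral_tsum]
        · refine tsum_congr fun pr => ?_
          exact lintegral_indicator_const
            ((Bset_meas q M pr.1 pr.2.1).inter (measurable_coord _ pr.1)) _
        · intro pr
          exact (measurable_const.indicator
            ((Bset_meas q M pr.1 pr.2.1).inter (measurable_coord _ pr.1))).aemeasurable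
    _ = ∑' z : S, ∑' t : ℕ, ∑' m : ℕ, ENNReal.ofReal (q z)
          * c.P x₀ (Bset q M z t ∩ {ω' : ℕ → S | ω' (t + m) = z}) := by
        rw [ENNReal.tsum_prod']
        refine tsum_congr fun z => ?_
        rw [ENNReal.tsum_prod']
    _ = ∑' z : S, ∑' t : ℕ, ENNReal.ofReal (q z) * (c.P x₀ (Bset q M z t) * c.green z z) := by
        refine tsum_congr fun z => tsum_congr fun t => ?_
        rw [ENNReal.tsum_mul_left]
        congr 1
        have : ∀ m : ℕ, c.P x₀ (Bset q M z t ∩ {ω' : ℕ → S | ω' (t + m) = z})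
            = c.P x₀ (Bset q M z t) * c.r m z z :=
          fun m => P_det_inter c x₀ z t _ (Bset_det q M z t) (hBz z t) m
        rw [tsum_congr this, ENNReal.tsum_mul_left, green_eq]
    _ ≤ ∑' z : S, ∑' t : ℕ, K * (ENNReal.ofReal (q z) * c.P x₀ (Bset q M z t)) := by
        refine ENNReal.tsum_le_tsum fun z => ENNReal.tsum_le_tsum fun t => ?_
        calc ENNReal.ofReal (q z) * (c.P x₀ (Bset q M z t) * c.green z z)
            ≤ ENNReal.ofReal (q z) * (c.P x₀ (Bset q M z t) * K) := by
              exact mul_le_mul_right (mul_le_mul_right (hg z) _) _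
          _ = K * (ENNReal.ofReal (q z) * c.P x₀ (Bset q M z t)) := by ring
    _ = K * ∑' pr : S × ℕ, ENNReal.ofReal (q pr.1) * c.P x₀ (Bset q M pr.1 pr.2) := by
        rw [ENNReal.tsum_prod', ← ENNReal.tsum_mul_left]
        refine tsum_congr fun z => ?_
        rw [← ENNReal.tsum_mul_left]
    _ = K * ∫⁻ ω, ∑' pr : S × ℕ, Set.indicator (Bset q M pr.1 pr.2)
          (fun _ => ENNReal.ofReal (q pr.1)) ω ∂(c.P x₀) := by
        congr 1
        rw [lintegral_tsum]
        · exact (tsum_congr fun pr : S × ℕ =>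
            (lintegral_indicator_const (Bset_meas q M pr.1 pr.2) _)).symm
        · intro pr
          exact (measurable_const.indicator (Bset_meas q M pr.1 pr.2)).aemeasurable
    _ ≤ K * ∫⁻ _, (M : ℝ≥0∞) ∂(c.P x₀) :=
        mul_le_mul_right (lintegral_mono (step3 q M)) K
    _ = K * M := by
        have := c.prob x₀
        rw [lintegral_const, measure_univ, mul_one]


lemma Squench_le_Stilde (q : S → ℝ) (ω : ℕ → S) : Squench q ω ≤ Stilde q ω :=
  ENNReal.tsum_le_tsum fun i => by
    by_cases h : ∀ j < i, ω j ≠ ω i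
    · rw [if_pos h]
    · rw [if_neg h]; exact zero_le

lemma ae_part1 (c : MC S) (q : S → ℝ) (K : ℝ≥0∞) (hK : K ≠ ⊤) (hg : ∀ x, c.green x x ≤ K)
    (x₀ : S) : ∀ᵐ ω ∂ c.P x₀, Squench q ω < ⊤ → Stilde q ω < ⊤ := by
  have hM : ∀ M : ℕ, ∀ᵐ ω ∂ c.P x₀,
      Set.indicator {ω' : ℕ → S | Squench q ω' ≤ (M : ℝ≥0∞)} (Stilde q) ω < ⊤ := by
    intro M
    refine ae_lt_top ((meas_Stilde q).indicator ((meas_Squench q) measurableSet_Iic)) ?_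
    refine ne_top_of_le_ne_top ?_ (main_bound c q K hg x₀ M)
    exact ENNReal.mul_ne_top hK (ENNReal.natCast_ne_top M)
  have hall := ae_all_iff.mpr hM
  filter_upwards [hall] with ω hω hfin
  obtain ⟨M, hM'⟩ := ENNReal.exists_nat_gt hfin.ne
  have hmem : ω ∈ {ω' : ℕ → S | Squench q ω' ≤ (M : ℝ≥0∞)} := hM'.le
  have := hω M
  rwa [Set.indicator_of_mem hmem] at this

end Aux

/-- Theorem 1: If the Green's function satisfies `g (x, x) ≤ K` for all
`x`, then `P_{x₀}`-almost surely `S_∞ < ∞` implies `S̃_∞ < ∞`.  Consequently (since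
the annealed field is trapping iff `S̃_∞ = ∞` a.s. from every start, and the quenched
field is trapping iff `S_∞ = ∞` a.s. from every start) the annealed field is trapping
if and only if the quenched field is trapping. -/
theorem annealed_trapping_iff_quenched_trapping
    {S : Type*} [MeasurableSpace S] [MeasurableSingletonClass S] [Countable S]
    (c : MC S) (q : S → ℝ) (hq : ∀ s, 0 ≤ q s ∧ q s < 1)
    (K : ℝ≥0∞) (hK : K ≠ ⊤) (hg : ∀ x, c.green x x ≤ K) :
    (∀ x₀ : S, ∀ᵐ ω ∂ c.P x₀, Squench q ω < ⊤ → Stilde q ω < ⊤) ∧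
    ((∀ x : S, c.P x {ω | Stilde q ω = ⊤} = 1)
      ↔ ∀ x : S, c.P x {ω | Squench q ω = ⊤} = 1) := by
  refine ⟨fun x₀ => ae_part1 c q K hK hg x₀, ?_, ?_⟩
  · -- annealed trapping → quenched trapping
    intro hT x
    have := c.prob x
    have hB : MeasurableSet {ω : ℕ → S | Squench q ω = ⊤} :=
      (meas_Squench q) (measurableSet_singleton ⊤)
    have hA : MeasurableSet {ω : ℕ → S | Stilde q ω = ⊤} :=
      (meas_Stilde q) (measurableSet_singleton ⊤)
    have hae1 : ∀ᵐ ω ∂ c.P x, Stilde q ω = ⊤ := by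
      rw [ae_iff]
      have hcompl : {ω : ℕ → S | ¬ Stilde q ω = ⊤} = {ω : ℕ → S | Stilde q ω = ⊤}ᶜ := rfl
      rw [hcompl, measure_compl hA (measure_ne_top _ _), hT x, measure_univ, tsub_self]
    have hae2 : ∀ᵐ ω ∂ c.P x, Squench q ω = ⊤ := by
      filter_upwards [hae1, ae_part1 c q K hK hg x] with ω h1 h2
      by_contra hne
      exact (h2 (lt_top_iff_ne_top.mpr hne)).ne h1
    rw [ae_iff] at hae2
    have hcompl : {ω : ℕ → S | ¬ Squench q ω = ⊤} = {ω : ℕ → S | Squench q ω = ⊤}ᶜ := rfl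
    rw [hcompl, measure_compl hB (measure_ne_top _ _), measure_univ] at hae2
    have hle : (1 : ℝ≥0∞) ≤ c.P x {ω : ℕ → S | Squench q ω = ⊤} :=
      tsub_eq_zero_iff_le.mp hae2
    exact le_antisymm prob_le_one hle
  · -- quenched trapping → annealed trapping
    intro hQ x
    have := c.prob x
    have hsub : {ω : ℕ → S | Squench q ω = ⊤} ⊆ {ω : ℕ → S | Stilde q ω = ⊤} := by
      intro ω hw
      exact top_le_iff.mp (hw ▸ Squench_le_Stilde q ω)
    exact le_antisymm prob_le_one ((hQ x) ▸ measure_mono hsub)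
end

section
/- With τ_M = inf{k : S_k ≥ M} and S̃^{(M)} = Σ_{i=0}^∞ q(X_i) 1[τ(X_i) ≤ τ_M], if g(x,x) ≤ K for all x then E_{x_0} S̃^{(M)} ≤ K·E_{x_0} S_{τ_M} ≤ K(M+1); in particular S̃^{(M)} < ∞ almost surely. -/
open MeasureTheory ENNReal Classical

/-- `S_n ω = ∑_{i=0}^n q (X_i) 1[τ (X_i) = i]` (only first visits contribute). -/
noncomputable def Spartial {S : Type*} (q : S → ℝ) (n : ℕ) (ω : ℕ → S) : ℝ≥0∞ :=
  ∑ i ∈ Finset.range (n + 1), if ∀ j < i, ω j ≠ ω i then ENNReal.ofReal (q (ω i)) else 0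

/-- First hitting time `τ (s) = inf {k : X_k = s}` along a path, valued in `ℕ∞`. -/
noncomputable def firstHit {S : Type*} (ω : ℕ → S) (s : S) : ℕ∞ :=
  ⨅ (k : ℕ) (_ : ω k = s), (k : ℕ∞)

/-- `τ_M = inf {k : S_k ≥ M}`, valued in `ℕ∞`. -/
noncomputable def tauM {S : Type*} (q : S → ℝ) (M : ℝ) (ω : ℕ → S) : ℕ∞ :=
  ⨅ (k : ℕ) (_ : ENNReal.ofReal M ≤ Spartial q k ω), (k : ℕ∞)

/-- `S̃^{(M)} ω = ∑_{i=0}^∞ q (X_i) 1[τ (X_i) ≤ τ_M]`. -/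
noncomputable def StildeM {S : Type*} (q : S → ℝ) (M : ℝ) (ω : ℕ → S) : ℝ≥0∞ :=
  ∑' i : ℕ, if firstHit ω (ω i) ≤ tauM q M ω then ENNReal.ofReal (q (ω i)) else 0

/-- The stopped sum `S_{τ_M}` (equal to `⨆_{n ≤ τ_M} S_n` since `S` is nondecreasing). -/
noncomputable def SstopM {S : Type*} (q : S → ℝ) (M : ℝ) (ω : ℕ → S) : ℝ≥0∞ :=
  ⨆ n : ℕ, if (n : ℕ∞) ≤ tauM q M ω then Spartial q n ω else 0

section Aux

variable {S : Type*} [MeasurableSpace S] [MeasurableSingletonClass S] [Countable S]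

set_option linter.unusedSectionVars false

lemma mSet_eq (i : ℕ) (y : S) : MeasurableSet {ω : ℕ → S | ω i = y} := by
  have h : {ω : ℕ → S | ω i = y} = (fun ω : ℕ → S => ω i) ⁻¹' {y} := rfl
  rw [h]
  exact measurable_pi_apply i (measurableSet_singleton y)

lemma mSet_eq2 (i j : ℕ) : MeasurableSet {ω : ℕ → S | ω i = ω j} := by
  have h : {ω : ℕ → S | ω i = ω j} = ⋃ y : S, ({ω | ω i = y} ∩ {ω | ω j = y}) := by
    ext ω
    simp only [Set.mem_setOf_eq, Set.mem_iUnion, Set.mem_inter_iff]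
    exact ⟨fun h => ⟨ω j, h, rfl⟩, fun ⟨y, h1, h2⟩ => h1.trans h2.symm⟩
  rw [h]
  exact MeasurableSet.iUnion fun y => (mSet_eq i y).inter (mSet_eq j y)

lemma meas_Spartial (q : S → ℝ) (k : ℕ) : Measurable (Spartial q k) := by
  unfold Spartial
  apply Finset.measurable_sum
  intro i _
  refine Measurable.ite ?_ ?_ measurable_const
  · have h : {ω : ℕ → S | ∀ j < i, ω j ≠ ω i}
        = ⋂ j, ⋂ _ : j < i, {ω : ℕ → S | ω j = ω i}ᶜ := by
      ext ω; simp [Set.mem_iInter]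
    rw [h]
    exact MeasurableSet.iInter fun j => MeasurableSet.iInter fun _ => (mSet_eq2 j i).compl
  · exact (measurable_of_countable fun s => ENNReal.ofReal (q s)).comp (measurable_pi_apply i)

lemma good_iff (q : S → ℝ) (M : ℝ) (j : ℕ) (ω : ℕ → S) :
    (j : ℕ∞) ≤ tauM q M ω ↔ ∀ k < j, ¬ (ENNReal.ofReal M ≤ Spartial q k ω) := by
  unfold tauM
  rw [le_iInf_iff]
  constructor
  · intro h k hk hc
    have h2 := h k
    rw [le_iInf_iff] at h2
    have h3 := h2 hc
    have : j ≤ k := by exact_mod_cast h3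
    omega
  · intro h k
    rw [le_iInf_iff]
    intro hc
    by_contra hlt
    push_neg at hlt
    have hkj : k < j := by exact_mod_cast hlt
    exact h k hkj hc

lemma Spartial_congr (q : S → ℝ) (k : ℕ) {ω ω' : ℕ → S} (h : ∀ i ≤ k, ω i = ω' i) :
    Spartial q k ω = Spartial q k ω' := by
  unfold Spartial
  refine Finset.sum_congr rfl fun i hi => ?_
  rw [Finset.mem_range] at hi
  have hik : i ≤ k := Nat.lt_succ_iff.mp hi
  have hcond : (∀ j < i, ω j ≠ ω i) ↔ (∀ j < i, ω' j ≠ ω' i) := by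
    constructor <;> intro H j hj
    · rw [← h j (le_trans hj.le hik), ← h i hik]; exact H j hj
    · rw [h j (le_trans hj.le hik), h i hik]; exact H j hj
  by_cases hc : ∀ j < i, ω j ≠ ω i
  · rw [if_pos hc, if_pos (hcond.mp hc), h i hik]
  · rw [if_neg hc, if_neg (fun hc' => hc (hcond.mpr hc'))]

lemma good_congr (q : S → ℝ) (M : ℝ) {j : ℕ} {ω ω' : ℕ → S} (h : ∀ i ≤ j, ω i = ω' i) :
    ((j : ℕ∞) ≤ tauM q M ω ↔ (j : ℕ∞) ≤ tauM q M ω') := by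
  rw [good_iff, good_iff]
  refine forall_congr' fun k => ?_
  constructor <;> intro H hk hc <;> apply H hk
  · rwa [Spartial_congr q k (fun i hi => h i (le_trans hi hk.le))]
  · rwa [← Spartial_congr q k (fun i hi => h i (le_trans hi hk.le))]


def cylS (z : ℕ → S) (n : ℕ) : Set (ℕ → S) := {ω | ∀ i ≤ n, ω i = z i}

lemma meas_cyl (z : ℕ → S) (n : ℕ) : MeasurableSet (cylS z n) := by
  have h : cylS z n = ⋂ i, ⋂ _ : i ≤ n, {ω : ℕ → S | ω i = z i} := by
    ext ω; simp [cylS, Set.mem_iInter]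
  rw [h]
  exact MeasurableSet.iInter fun i => MeasurableSet.iInter fun _ => mSet_eq i (z i)

def Det (n : ℕ) (A : Set (ℕ → S)) : Prop :=
  ∀ ⦃ω ω' : ℕ → S⦄, (∀ i ≤ n, ω i = ω' i) → ω ∈ A → ω' ∈ A

lemma Det.mono {n n' : ℕ} (h : n ≤ n') {A : Set (ℕ → S)} (hA : Det n A) : Det n' A :=
  fun _ _ hagree => hA fun i hi => hagree i (hi.trans h)

def extP (n : ℕ) (v : Fin (n+1) → S) : ℕ → S :=
  fun i => v ⟨min i n, Nat.lt_succ_of_le (min_le_right i n)⟩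

lemma extP_le {n : ℕ} (v : Fin (n+1) → S) {i : ℕ} (hi : i ≤ n) :
    extP n v i = v ⟨i, Nat.lt_succ_of_le hi⟩ := by
  simp only [extP]
  exact congrArg v (Fin.ext (Nat.min_eq_left hi))

lemma det_iUnion {n : ℕ} {A : Set (ℕ → S)} (hA : Det n A) :
    A = ⋃ v : Fin (n+1) → S, (if extP n v ∈ A then cylS (extP n v) n else ∅) := by
  ext ω
  simp only [Set.mem_iUnion]
  constructor
  · intro hω
    refine ⟨fun j => ω j, ?_⟩
    have hagree : ∀ i ≤ n, ω i = extP n (fun j : Fin (n+1) => ω j) i := fun i hi => by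
      rw [extP_le _ hi]
    rw [if_pos (hA hagree hω)]
    exact fun i hi => hagree i hi
  · rintro ⟨v, hv⟩
    by_cases h : extP n v ∈ A
    · rw [if_pos h] at hv
      exact hA (fun i hi => (hv i hi).symm) h
    · rw [if_neg h] at hv
      exact absurd hv (Set.notMem_empty ω)

lemma decomp (c : MC S) (x : S) {n : ℕ} {A : Set (ℕ → S)} (hA : Det n A) :
    c.P x A = ∑' v : Fin (n+1) → S,
      if extP n v ∈ A then c.P x (cylS (extP n v) n) else 0 := by
  have hdisj : Pairwise (Function.onFun Disjoint
      (fun v : Fin (n+1) → S => if extP n v ∈ A then cylS (extP n v) n else ∅)) := by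
    intro v v' hvv'
    dsimp [Function.onFun]
    split
    · split
      · rw [Set.disjoint_left]
        intro ω h h'
        apply hvv'
        funext j
        have hj : (j : ℕ) ≤ n := Nat.lt_succ_iff.mp j.2
        have e1 := h j.1 hj
        have e2 := h' j.1 hj
        rw [extP_le v hj] at e1
        rw [extP_le v' hj] at e2
        have : (⟨j.1, Nat.lt_succ_of_le hj⟩ : Fin (n+1)) = j := Fin.ext rfl
        rw [this] at e1 e2
        exact e1.symm.trans e2
      · simp
    · simp
  have hmeas : ∀ v : Fin (n+1) → S,
      MeasurableSet (if extP n v ∈ A then cylS (extP n v) n else ∅) := fun v => by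
    split
    · exact meas_cyl _ _
    · exact MeasurableSet.empty
  calc c.P x A
      = c.P x (⋃ v : Fin (n+1) → S, (if extP n v ∈ A then cylS (extP n v) n else ∅)) := by
        rw [← det_iUnion hA]
    _ = ∑' v : Fin (n+1) → S, c.P x (if extP n v ∈ A then cylS (extP n v) n else ∅) :=
        measure_iUnion hdisj hmeas
    _ = _ := tsum_congr fun v => by
        split
        · rfl
        · exact measure_empty

lemma Det.measurableSet {n : ℕ} {A : Set (ℕ → S)} (hA : Det n A) : MeasurableSet A := by
  rw [det_iUnion hA]
  refine MeasurableSet.iUnion fun v => ?_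
  split
  · exact meas_cyl _ _
  · exact MeasurableSet.empty

lemma partitionP (c : MC S) (x : S) {C : Set (ℕ → S)} (hC : MeasurableSet C) (N : ℕ) :
    c.P x C = ∑' u : S, c.P x (C ∩ {ω | ω N = u}) := by
  have hU : C = ⋃ u : S, C ∩ {ω | ω N = u} := by
    ext ω
    simp only [Set.mem_iUnion, Set.mem_inter_iff, Set.mem_setOf_eq]
    exact ⟨fun h => ⟨ω N, h, rfl⟩, fun ⟨u, h, _⟩ => h⟩
  have hdisj : Pairwise (Function.onFun Disjoint (fun u : S => C ∩ {ω | ω N = u})) := by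
    intro u u' huu'
    rw [Function.onFun, Set.disjoint_left]
    rintro ω ⟨_, h1⟩ ⟨_, h2⟩
    exact huu' (h1.symm.trans h2)
  conv_lhs => rw [hU]
  exact measure_iUnion hdisj fun u => hC.inter (mSet_eq N u)


lemma stepP (c : MC S) (x : S) {n : ℕ} {B : Set (ℕ → S)} {u : S}
    (hB : Det n B) (hBu : B ⊆ {ω | ω n = u}) (y : S) :
    c.P x (B ∩ {ω | ω (n+1) = y}) = c.P x B * c.p u y := by
  have hA' : Det (n+1) (B ∩ {ω | ω (n+1) = y}) := by
    rintro ω ω' hag ⟨h1, h2⟩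
    refine ⟨hB (fun i hi => hag i (hi.trans (Nat.le_succ n))) h1, ?_⟩
    show ω' (n+1) = y
    rw [← hag (n+1) le_rfl]
    exact h2
  rw [decomp c x hA']
  have key : ∀ v : Fin (n+1+1) → S,
      (@ite ℝ≥0∞ (extP (n+1) v ∈ B ∩ {ω | ω (n+1) = y}) (propDecidable _)
        (c.P x (cylS (extP (n+1) v) (n+1))) 0)
      = (@ite ℝ≥0∞ (extP (n+1) v ∈ B ∩ {ω | ω (n+1) = y}) (propDecidable _)
        (c.P x (cylS (extP (n+1) v) n)) 0) * c.p u y := by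
    intro v
    by_cases h : extP (n+1) v ∈ B ∩ {ω | ω (n+1) = y}
    · rw [if_pos h, if_pos h]
      have hm := c.markov x n (extP (n+1) v)
      have hu : extP (n+1) v n = u := hBu h.1
      have hy : extP (n+1) v (n+1) = y := h.2
      calc c.P x (cylS (extP (n+1) v) (n+1))
          = c.P x (cylS (extP (n+1) v) n)
            * c.p (extP (n+1) v n) (extP (n+1) v (n+1)) := hm
        _ = _ := by rw [hu, hy]
    · rw [if_neg h, if_neg h, zero_mul]
  refine (tsum_congr key).trans ?_
  rw [ENNReal.tsum_mul_right]
  congr 1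
  rw [decomp c x hB]
  rw [← (Fin.snocEquiv (fun _ : Fin (n+1+1) => S)).tsum_eq, ENNReal.tsum_prod']
  have keq : ∀ (s : S) (w : Fin (n+1) → S),
      (@ite ℝ≥0∞
        (extP (n+1) (Fin.snocEquiv (fun _ : Fin (n+1+1) => S) (s, w)) ∈ B ∩ {ω | ω (n+1) = y})
        (propDecidable _)
        (c.P x (cylS (extP (n+1) (Fin.snocEquiv (fun _ : Fin (n+1+1) => S) (s, w))) n)) 0)
      = if s = y then (if extP n w ∈ B then c.P x (cylS (extP n w) n) else 0) else 0 := by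
    intro s w
    set v : Fin (n+1+1) → S := Fin.snocEquiv (fun _ : Fin (n+1+1) => S) (s, w) with hv
    have hvc : ∀ j : Fin (n+1), v (Fin.castSucc j) = w j := by
      intro j
      simp [hv, Fin.snocEquiv]
    have hvl : v (Fin.last (n+1)) = s := by
      simp [hv, Fin.snocEquiv]
    have hag : ∀ i ≤ n, extP (n+1) v i = extP n w i := by
      intro i hi
      rw [extP_le v (hi.trans (Nat.le_succ n)), extP_le w hi]
      have h1 : (⟨i, Nat.lt_succ_of_le (hi.trans (Nat.le_succ n))⟩ : Fin (n+1+1))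
          = Fin.castSucc ⟨i, Nat.lt_succ_of_le hi⟩ := Fin.ext rfl
      rw [h1, hvc]
    have hlast : extP (n+1) v (n+1) = s := by
      rw [extP_le v le_rfl]
      have h1 : (⟨n+1, Nat.lt_succ_of_le le_rfl⟩ : Fin (n+1+1)) = Fin.last (n+1) := Fin.ext rfl
      rw [h1, hvl]
    have hBiff : extP (n+1) v ∈ B ↔ extP n w ∈ B :=
      ⟨fun h => hB (fun i hi => hag i hi) h, fun h => hB (fun i hi => (hag i hi).symm) h⟩
    have hcyl : cylS (extP (n+1) v) n = cylS (extP n w) n := by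
      ext ω
      constructor <;> intro h i hi
      · rw [← hag i hi]; exact h i hi
      · rw [hag i hi]; exact h i hi
    by_cases hs : s = y
    · by_cases hb : extP n w ∈ B
      · rw [if_pos ⟨hBiff.mpr hb, by show extP (n+1) v (n+1) = y; rw [hlast, hs]⟩,
          hcyl, if_pos hs, if_pos hb]
      · rw [if_neg (fun hmem => hb (hBiff.mp hmem.1)), if_pos hs, if_neg hb]
    · rw [if_neg (fun hmem => hs (hlast.symm.trans hmem.2)), if_neg hs]
  rw [tsum_congr (fun s => tsum_congr (fun w => keq s w))]
  have hout : ∀ s : S,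
      (∑' w : Fin (n+1) → S,
        if s = y then (if extP n w ∈ B then c.P x (cylS (extP n w) n) else 0) else 0)
      = if s = y then
          (∑' w : Fin (n+1) → S, if extP n w ∈ B then c.P x (cylS (extP n w) n) else 0)
        else 0 := by
    intro s
    by_cases hs : s = y <;> simp [hs]
  rw [tsum_congr hout, tsum_eq_single y (fun s hs => if_neg hs), if_pos rfl]

lemma iterateP (c : MC S) (x z : S) (m : ℕ) :
    ∀ (n : ℕ) (A : Set (ℕ → S)), Det n A → A ⊆ {ω | ω n = z} → ∀ y : S,
      c.P x (A ∩ {ω | ω (n+m) = y}) = c.P x A * c.P z {ω | ω m = y} := by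
  induction m with
  | zero =>
    intro n A hA hAz y
    by_cases hy : y = z
    · subst hy
      have h1 : A ∩ {ω : ℕ → S | ω (n+0) = y} = A :=
        Set.inter_eq_self_of_subset_left (fun ω h => hAz h)
      rw [h1, c.start y, mul_one]
    · have h1 : A ∩ {ω : ℕ → S | ω (n+0) = y} = ∅ := by
        ext ω
        simp only [Set.mem_inter_iff, Set.mem_setOf_eq, Set.mem_empty_iff_false, iff_false,
          not_and]
        intro hωA hωy
        exact hy ((hωy).symm.trans (hAz hωA))
      have h2 : c.P z {ω : ℕ → S | ω 0 = y} = 0 := by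
        haveI := c.prob z
        have hsub : {ω : ℕ → S | ω 0 = y} ⊆ {ω : ℕ → S | ω 0 = z}ᶜ := by
          intro ω h hz
          exact hy (h.symm.trans hz)
        refine le_antisymm ?_ zero_le
        calc c.P z {ω : ℕ → S | ω 0 = y} ≤ c.P z {ω : ℕ → S | ω 0 = z}ᶜ := measure_mono hsub
          _ = 1 - c.P z {ω : ℕ → S | ω 0 = z} := by
              rw [measure_compl (mSet_eq 0 z) (measure_ne_top _ _), measure_univ]
          _ = 0 := by rw [c.start z]; simp
      rw [h1, h2, mul_zero, measure_empty]
  | succ m ih =>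
    intro n A hA hAz y
    haveI := c.prob z
    have hAmeas : MeasurableSet (A ∩ {ω : ℕ → S | ω (n+(m+1)) = y}) :=
      hA.measurableSet.inter (mSet_eq _ y)
    rw [partitionP c x hAmeas (n+m)]
    have hterm : ∀ u : S,
        c.P x (A ∩ {ω | ω (n+(m+1)) = y} ∩ {ω | ω (n+m) = u})
        = (c.P x A * c.P z {ω | ω m = u}) * c.p u y := by
      intro u
      have hre : A ∩ {ω : ℕ → S | ω (n+(m+1)) = y} ∩ {ω | ω (n+m) = u}
          = (A ∩ {ω | ω (n+m) = u}) ∩ {ω | ω ((n+m)+1) = y} := by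
        rw [Set.inter_right_comm]; rfl
      rw [hre]
      have hDetB : Det (n+m) (A ∩ {ω : ℕ → S | ω (n+m) = u}) := by
        rintro ω ω' hag ⟨h1, h2⟩
        refine ⟨(hA.mono (Nat.le_add_right n m)) hag h1, ?_⟩
        show ω' (n+m) = u
        rw [← hag (n+m) le_rfl]
        exact h2
      rw [stepP c x hDetB Set.inter_subset_right y, ih n A hA hAz u]
    rw [tsum_congr hterm]
    have hgreen : c.P z {ω : ℕ → S | ω (m+1) = y}
        = ∑' u : S, c.P z {ω | ω m = u} * c.p u y := by
      rw [partitionP c z (mSet_eq (m+1) y) m]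
      refine tsum_congr fun u => ?_
      have hre : {ω : ℕ → S | ω (m+1) = y} ∩ {ω | ω m = u}
          = {ω : ℕ → S | ω m = u} ∩ {ω | ω (m+1) = y} := Set.inter_comm _ _
      have hDetB : Det m {ω : ℕ → S | ω m = u} := by
        intro ω ω' hag h
        show ω' m = u
        rw [← hag m le_rfl]
        exact h
      rw [hre, stepP c z hDetB (fun ω h => h) y]
    rw [hgreen, ← ENNReal.tsum_mul_left]
    exact tsum_congr fun u => mul_assoc _ _ _


def fvAt (ω : ℕ → S) (j : ℕ) (y : S) : Prop := ω j = y ∧ ∀ k < j, ω k ≠ y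

lemma firstHit_eq_of_fvAt {ω : ℕ → S} {j : ℕ} {y : S} (h : fvAt ω j y) :
    firstHit ω y = (j : ℕ∞) := by
  refine le_antisymm (iInf₂_le j h.1) ?_
  refine le_iInf fun k => le_iInf fun hk => ?_
  by_contra hlt
  push_neg at hlt
  exact h.2 k (by exact_mod_cast hlt) hk

lemma fvAt_unique {ω : ℕ → S} {j j' : ℕ} {y : S} (h : fvAt ω j y) (h' : fvAt ω j' y) :
    j = j' := by
  by_contra hne
  rcases Nat.lt_or_ge j j' with hlt | hge
  · exact h'.2 j hlt h.1
  · exact h.2 j' (lt_of_le_of_ne hge fun e => hne e.symm) h'.1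

lemma fvAt_exists (ω : ℕ → S) (i : ℕ) : ∃ j ≤ i, fvAt ω j (ω i) := by
  have hex : ∃ j, ω j = ω i := ⟨i, rfl⟩
  exact ⟨Nat.find hex, Nat.find_min' hex rfl,
    Nat.find_spec hex, fun k hk => Nat.find_min hex hk⟩

def Aset (q : S → ℝ) (M : ℝ) (j : ℕ) (y : S) : Set (ℕ → S) :=
  {ω | fvAt ω j y ∧ (j : ℕ∞) ≤ tauM q M ω}

lemma det_Aset (q : S → ℝ) (M : ℝ) (j : ℕ) (y : S) : Det j (Aset q M j y) := by
  rintro ω ω' hag ⟨⟨h1, h2⟩, h3⟩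
  refine ⟨⟨by rw [← hag j le_rfl]; exact h1,
    fun k hk => by rw [← hag k hk.le]; exact h2 k hk⟩, ?_⟩
  exact (good_congr q M hag).mp h3

lemma Aset_subset (q : S → ℝ) (M : ℝ) (j : ℕ) (y : S) :
    Aset q M j y ⊆ {ω | ω j = y} := fun _ h => h.1.1

lemma P1 (q : S → ℝ) (M : ℝ) (i : ℕ) (ω : ℕ → S) :
    (if firstHit ω (ω i) ≤ tauM q M ω then ENNReal.ofReal (q (ω i)) else 0)
    = ∑' y : S, ∑ j ∈ Finset.range (i+1),
        (if ω ∈ Aset q M j y ∧ ω i = y then ENNReal.ofReal (q y) else 0) := by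
  rw [tsum_eq_single (ω i) ?h0]
  case h0 =>
    intro y hy
    apply Finset.sum_eq_zero
    intro j _
    rw [if_neg]
    rintro ⟨_, h2⟩
    exact hy h2.symm
  obtain ⟨j₀, hj₀i, hfv⟩ := fvAt_exists ω i
  rw [Finset.sum_eq_single_of_mem j₀ (Finset.mem_range.mpr (Nat.lt_succ_of_le hj₀i)) ?huniq]
  case huniq =>
    intro j _ hjne
    rw [if_neg]
    rintro ⟨⟨hfv', _⟩, _⟩
    exact hjne (fvAt_unique hfv' hfv)
  rw [firstHit_eq_of_fvAt hfv]
  refine if_congr ?_ rfl rfl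
  constructor
  · intro h
    exact ⟨⟨hfv, h⟩, rfl⟩
  · rintro ⟨⟨_, h⟩, _⟩
    exact h

lemma P2 (q : S → ℝ) (M : ℝ) (ω : ℕ → S) :
    SstopM q M ω = ∑' i : ℕ, ∑' y : S,
      (if ω ∈ Aset q M i y ∧ ω i = y then ENNReal.ofReal (q y) else 0) := by
  have hinner : ∀ i : ℕ,
      (∑' y : S, if ω ∈ Aset q M i y ∧ ω i = y then ENNReal.ofReal (q y) else 0)
      = (if ((i : ℕ∞) ≤ tauM q M ω ∧ ∀ k < i, ω k ≠ ω i)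
          then ENNReal.ofReal (q (ω i)) else 0) := by
    intro i
    rw [tsum_eq_single (ω i) (fun y hy => if_neg (fun h => hy h.2.symm))]
    refine if_congr ?_ rfl rfl
    constructor
    · rintro ⟨⟨hfv, hτ⟩, _⟩
      exact ⟨hτ, hfv.2⟩
    · rintro ⟨hτ, hfv⟩
      exact ⟨⟨⟨rfl, hfv⟩, hτ⟩, rfl⟩
  rw [tsum_congr hinner]
  set h : ℕ → ℝ≥0∞ := fun i =>
    if ((i : ℕ∞) ≤ tauM q M ω ∧ ∀ k < i, ω k ≠ ω i) then ENNReal.ofReal (q (ω i)) else 0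
    with hh
  have hsum : ∀ n : ℕ, ∑ i ∈ Finset.range n, h i ≤ SstopM q M ω := by
    intro n
    have hle : ∀ N : ℕ, (N : ℕ∞) ≤ tauM q M ω →
        ∀ m : ℕ, m ≤ N → ∑ i ∈ Finset.range (m+1), h i ≤ SstopM q M ω := by
      intro N hN m hm
      have h1 : ∑ i ∈ Finset.range (m+1), h i ≤ Spartial q m ω := by
        unfold Spartial
        refine Finset.sum_le_sum fun i _ => ?_
        simp only [hh]
        by_cases hfull : ((i : ℕ∞) ≤ tauM q M ω ∧ ∀ k < i, ω k ≠ ω i)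
        · rw [if_pos hfull, if_pos hfull.2]
        · rw [if_neg hfull]
          exact zero_le
      have hmN : (m : ℕ∞) ≤ tauM q M ω := le_trans (Nat.cast_le.mpr hm) hN
      calc ∑ i ∈ Finset.range (m+1), h i ≤ Spartial q m ω := h1
        _ = if (m : ℕ∞) ≤ tauM q M ω then Spartial q m ω else 0 := (if_pos hmN).symm
        _ ≤ SstopM q M ω :=
          le_iSup (fun k : ℕ => if (k : ℕ∞) ≤ tauM q M ω then Spartial q k ω else 0) m
    match n with
    | 0 => simp
    | Nat.succ m =>
      by_cases hm : ((m : ℕ∞)) ≤ tauM q M ω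
      · exact hle m hm m le_rfl
      · have hne : tauM q M ω ≠ ⊤ := fun htop => hm (htop ▸ le_top)
        obtain ⟨N, hN⟩ := WithTop.ne_top_iff_exists.mp hne
        have hNm : N < m := by
          by_contra hge
          push_neg at hge
          exact hm (hN ▸ Nat.cast_le.mpr hge)
        have hzero : ∀ i ∈ Finset.range (m+1), i ∉ Finset.range (N+1) → h i = 0 := by
          intro i _ hi2
          rw [Finset.mem_range, not_lt] at hi2
          simp only [hh]
          rw [if_neg]
          rintro ⟨hτ, _⟩
          rw [← hN] at hτ
          have : i ≤ N := Nat.cast_le.mp hτ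
          omega
        rw [← Finset.sum_subset (Finset.range_subset_range.mpr (by omega : N+1 ≤ m+1)) hzero]
        exact hle N (le_of_eq hN) N le_rfl
  apply le_antisymm
  · refine iSup_le fun n => ?_
    by_cases hn : (n : ℕ∞) ≤ tauM q M ω
    · rw [if_pos hn]
      have heq : Spartial q n ω = ∑ i ∈ Finset.range (n+1), h i := by
        unfold Spartial
        refine Finset.sum_congr rfl fun i hi => ?_
        rw [Finset.mem_range, Nat.lt_succ_iff] at hi
        have hgood : (i : ℕ∞) ≤ tauM q M ω := le_trans (by exact_mod_cast hi) hn
        simp only [hh]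
        by_cases hc : ∀ k < i, ω k ≠ ω i
        · rw [if_pos hc, if_pos ⟨hgood, hc⟩]
        · rw [if_neg hc, if_neg (fun hhh => hc hhh.2)]
      rw [heq]
      exact ENNReal.sum_le_tsum _
    · rw [if_neg hn]
      exact zero_le
  · rw [ENNReal.tsum_eq_iSup_nat]
    exact iSup_le hsum


lemma SstopM_le (q : S → ℝ) (hq : ∀ s, 0 ≤ q s ∧ q s < 1) (M : ℝ) (hM : 0 ≤ M)
    (ω : ℕ → S) : SstopM q M ω ≤ ENNReal.ofReal (M+1) := by
  have hterm : ∀ i : ℕ,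
      (if ∀ j < i, ω j ≠ ω i then ENNReal.ofReal (q (ω i)) else 0) ≤ 1 := by
    intro i
    have h1 : ENNReal.ofReal (q (ω i)) ≤ 1 := by
      rw [← ENNReal.ofReal_one]
      exact ENNReal.ofReal_le_ofReal (hq (ω i)).2.le
    split
    · exact h1
    · exact zero_le
  refine iSup_le fun n => ?_
  by_cases hn : (n : ℕ∞) ≤ tauM q M ω
  · rw [if_pos hn]
    match n, hn with
    | 0, _ =>
      have h0 : Spartial q 0 ω ≤ 1 := by
        unfold Spartial
        simpa using hterm 0
      calc Spartial q 0 ω ≤ 1 := h0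
        _ ≤ ENNReal.ofReal (M+1) := by
            rw [← ENNReal.ofReal_one]
            exact ENNReal.ofReal_le_ofReal (by linarith)
    | Nat.succ m, hn =>
      have hm : ¬ (ENNReal.ofReal M ≤ Spartial q m ω) := by
        intro hc
        have h2 : tauM q M ω ≤ (m : ℕ∞) := iInf₂_le m hc
        have h3 : ((m+1 : ℕ) : ℕ∞) ≤ (m : ℕ∞) := le_trans hn h2
        have h4 : m + 1 ≤ m := Nat.cast_le.mp h3
        omega
      have hSm : Spartial q m ω ≤ ENNReal.ofReal M := (not_le.mp hm).le
      have hsp : Spartial q (m+1) ω = Spartial q m ω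
          + (if ∀ j < m+1, ω j ≠ ω (m+1) then ENNReal.ofReal (q (ω (m+1))) else 0) := by
        unfold Spartial
        rw [Finset.sum_range_succ]
      rw [hsp]
      calc _ ≤ ENNReal.ofReal M + 1 := add_le_add hSm (hterm (m+1))
        _ = ENNReal.ofReal (M+1) := by
            rw [ENNReal.ofReal_add hM zero_le_one, ENNReal.ofReal_one]
  · rw [if_neg hn]
    exact zero_le

lemma meas_hitSet (q : S → ℝ) (M : ℝ) (i : ℕ) :
    MeasurableSet {ω : ℕ → S | firstHit ω (ω i) ≤ tauM q M ω} := by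
  have h : {ω : ℕ → S | firstHit ω (ω i) ≤ tauM q M ω}
      = ⋃ (j : ℕ), ⋃ (y : S), (Aset q M j y ∩ {ω | ω i = y}) := by
    ext ω
    simp only [Set.mem_setOf_eq, Set.mem_iUnion, Set.mem_inter_iff]
    constructor
    · intro h
      obtain ⟨j₀, _, hfv⟩ := fvAt_exists ω i
      exact ⟨j₀, ω i, ⟨hfv, by rwa [firstHit_eq_of_fvAt hfv] at h⟩, rfl⟩
    · rintro ⟨j, y, ⟨hfv, hτ⟩, hωi⟩
      rw [show (ω i : S) = y from hωi, firstHit_eq_of_fvAt hfv]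
      exact hτ
  rw [h]
  exact MeasurableSet.iUnion fun j => MeasurableSet.iUnion fun y =>
    ((det_Aset q M j y).measurableSet).inter (mSet_eq i y)


lemma hmt2 (c : MC S) (q : S → ℝ) (M : ℝ) (i j : ℕ) (y : S) :
    Measurable (fun ω : ℕ → S =>
      if ω ∈ Aset q M j y ∧ ω i = y then ENNReal.ofReal (q y) else 0) := by
  have hms : MeasurableSet {ω : ℕ → S | ω ∈ Aset q M j y ∧ ω i = y} := by
    have h : {ω : ℕ → S | ω ∈ Aset q M j y ∧ ω i = y}
        = Aset q M j y ∩ {ω | ω i = y} := rfl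
    rw [h]
    exact (det_Aset q M j y).measurableSet.inter (mSet_eq i y)
  exact Measurable.ite hms measurable_const measurable_const

lemma hind2 (q : S → ℝ) (M : ℝ) (i j : ℕ) (y : S) (ω : ℕ → S) :
    (if ω ∈ Aset q M j y ∧ ω i = y then ENNReal.ofReal (q y) else 0)
    = (Aset q M j y ∩ {ω' | ω' i = y}).indicator (fun _ => ENNReal.ofReal (q y)) ω := by
  by_cases hc : ω ∈ Aset q M j y ∧ ω i = y
  · rw [if_pos hc]
    exact (Set.indicator_of_mem (Set.mem_inter hc.1 hc.2) (fun _ => ENNReal.ofReal (q y))).symm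
  · rw [if_neg hc]
    exact (Set.indicator_of_notMem (fun hm => hc ⟨hm.1, hm.2⟩) (fun _ => ENNReal.ofReal (q y))).symm

lemma lint_one (c : MC S) (q : S → ℝ) (M : ℝ) (x₀ : S) (i j : ℕ) (y : S) :
    (∫⁻ ω, (if ω ∈ Aset q M j y ∧ ω i = y then ENNReal.ofReal (q y) else 0) ∂ c.P x₀)
    = ENNReal.ofReal (q y) * c.P x₀ (Aset q M j y ∩ {ω | ω i = y}) := by
  rw [lintegral_congr (hind2 q M i j y),
    lintegral_indicator_const ((det_Aset q M j y).measurableSet.inter (mSet_eq i y))]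

lemma lint_stop (c : MC S) (q : S → ℝ) (M : ℝ) (x₀ : S) :
    (∫⁻ ω, SstopM q M ω ∂ c.P x₀)
    = ∑' (y : S), ∑' (j : ℕ), ENNReal.ofReal (q y) * c.P x₀ (Aset q M j y) := by
  rw [lintegral_congr (P2 q M)]
  rw [lintegral_tsum (fun i =>
    (Measurable.ennreal_tsum (fun y => hmt2 c q M i i y)).aemeasurable)]
  have hi : ∀ i : ℕ,
      (∫⁻ ω, ∑' y : S,
        (if ω ∈ Aset q M i y ∧ ω i = y then ENNReal.ofReal (q y) else 0) ∂ c.P x₀)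
      = ∑' y : S, ENNReal.ofReal (q y) * c.P x₀ (Aset q M i y) := by
    intro i
    rw [lintegral_tsum (fun y => (hmt2 c q M i i y).aemeasurable)]
    refine tsum_congr fun y => ?_
    rw [lint_one c q M x₀ i i y,
      Set.inter_eq_self_of_subset_left (fun ω h => h.1.1)]
  rw [tsum_congr hi, ENNReal.tsum_comm]

lemma lint_tilde (c : MC S) (q : S → ℝ) (M : ℝ) (x₀ : S) :
    (∫⁻ ω, StildeM q M ω ∂ c.P x₀)
    = ∑' (y : S), ∑' (j : ℕ), ∑' (i : ℕ),
        (if j ≤ i then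
          ENNReal.ofReal (q y) * c.P x₀ (Aset q M j y ∩ {ω | ω i = y}) else 0) := by
  unfold StildeM
  rw [lintegral_tsum (f := fun (i : ℕ) (ω : ℕ → S) =>
    if firstHit ω (ω i) ≤ tauM q M ω then ENNReal.ofReal (q (ω i)) else 0)
    (fun i => (Measurable.ite (meas_hitSet q M i)
    ((measurable_of_countable fun s => ENNReal.ofReal (q s)).comp (measurable_pi_apply i))
    measurable_const).aemeasurable)]
  have hi : ∀ i : ℕ,
      (∫⁻ ω, (if firstHit ω (ω i) ≤ tauM q M ω then ENNReal.ofReal (q (ω i)) else 0) ∂ c.P x₀)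
      = ∑' y : S, ∑ j ∈ Finset.range (i+1),
          ENNReal.ofReal (q y) * c.P x₀ (Aset q M j y ∩ {ω | ω i = y}) := by
    intro i
    rw [lintegral_congr (fun ω => P1 q M i ω)]
    rw [lintegral_tsum (fun y =>
      (Finset.measurable_sum _ (fun j _ => hmt2 c q M i j y)).aemeasurable)]
    refine tsum_congr fun y => ?_
    rw [lintegral_finset_sum _ (fun j _ => hmt2 c q M i j y)]
    exact Finset.sum_congr rfl fun j _ => lint_one c q M x₀ i j y
  rw [tsum_congr hi]
  have hconv : ∀ i : ℕ,
      (∑' y : S, ∑ j ∈ Finset.range (i+1),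
        ENNReal.ofReal (q y) * c.P x₀ (Aset q M j y ∩ {ω | ω i = y}))
      = ∑' y : S, ∑' j : ℕ,
        (if j ≤ i then
          ENNReal.ofReal (q y) * c.P x₀ (Aset q M j y ∩ {ω | ω i = y}) else 0) := by
    intro i
    refine tsum_congr fun y => ?_
    rw [show (∑' j : ℕ, (if j ≤ i then
          ENNReal.ofReal (q y) * c.P x₀ (Aset q M j y ∩ {ω | ω i = y}) else 0))
        = ∑ j ∈ Finset.range (i+1), (if j ≤ i then
          ENNReal.ofReal (q y) * c.P x₀ (Aset q M j y ∩ {ω | ω i = y}) else 0) from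
      tsum_eq_sum (fun j hj =>
        if_neg (fun hle => hj (Finset.mem_range.mpr (Nat.lt_succ_of_le hle))))]
    exact Finset.sum_congr rfl fun j hj =>
      (if_pos (Nat.lt_succ_iff.mp (Finset.mem_range.mp hj))).symm
  rw [tsum_congr hconv, ENNReal.tsum_comm]
  exact tsum_congr fun y => ENNReal.tsum_comm

end Aux

/-- With `τ_M = inf {k : S_k ≥ M}` and
`S̃^{(M)} = ∑_{i=0}^∞ q (X_i) 1[τ (X_i) ≤ τ_M]`, if `g (x, x) ≤ K` for all `x` then
`E_{x₀} S̃^{(M)} ≤ K ⋅ E_{x₀} S_{τ_M} ≤ K (M + 1)`; in particular `S̃^{(M)} < ∞`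
almost surely. -/
theorem StildeM_finite
    {S : Type*} [MeasurableSpace S] [MeasurableSingletonClass S] [Countable S]
    (c : MC S) (q : S → ℝ) (hq : ∀ s, 0 ≤ q s ∧ q s < 1)
    (K : ℝ≥0∞) (hK : K ≠ ⊤) (hg : ∀ x, c.green x x ≤ K)
    (M : ℝ) (hM : 0 ≤ M) (x₀ : S) :
    (∫⁻ ω, StildeM q M ω ∂ c.P x₀) ≤ K * ∫⁻ ω, SstopM q M ω ∂ c.P x₀ ∧
    K * (∫⁻ ω, SstopM q M ω ∂ c.P x₀) ≤ K * ENNReal.ofReal (M + 1) ∧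
    (∀ᵐ ω ∂ c.P x₀, StildeM q M ω < ⊤) := by
  haveI := c.prob x₀
  have hgreen : ∀ (y : S) (j : ℕ),
      (∑' i : ℕ, (if j ≤ i then
        ENNReal.ofReal (q y) * c.P x₀ (Aset q M j y ∩ {ω | ω i = y}) else 0))
      = ENNReal.ofReal (q y) * (c.P x₀ (Aset q M j y) * c.green y y) := by
    intro y j
    have hinj : Function.Injective (fun m : ℕ => j + m) := fun a b h => Nat.add_left_cancel h
    have hsupp : Function.support (fun i : ℕ => if j ≤ i then
        ENNReal.ofReal (q y) * c.P x₀ (Aset q M j y ∩ {ω | ω i = y}) else 0)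
        ⊆ Set.range (fun m : ℕ => j + m) := by
      intro i hi
      rcases le_or_gt j i with h | h
      · exact ⟨i - j, show j + (i - j) = i by omega⟩
      · exact absurd (if_neg (by omega)) hi
    rw [← Function.Injective.tsum_eq hinj hsupp]
    have hterm : ∀ m : ℕ,
        (if j ≤ j + m then
          ENNReal.ofReal (q y) * c.P x₀ (Aset q M j y ∩ {ω | ω (j+m) = y}) else 0)
        = ENNReal.ofReal (q y) * (c.P x₀ (Aset q M j y) * c.P y {ω | ω m = y}) := by
      intro m
      rw [if_pos (Nat.le_add_right j m),
        iterateP c x₀ y m j (Aset q M j y) (det_Aset q M j y) (Aset_subset q M j y) y]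
    rw [tsum_congr hterm, ENNReal.tsum_mul_left, ENNReal.tsum_mul_left]
    rfl
  have h1 : (∫⁻ ω, StildeM q M ω ∂ c.P x₀) ≤ K * ∫⁻ ω, SstopM q M ω ∂ c.P x₀ := by
    rw [lint_tilde c q M x₀, lint_stop c q M x₀]
    calc (∑' (y : S), ∑' (j : ℕ), ∑' (i : ℕ), (if j ≤ i then
          ENNReal.ofReal (q y) * c.P x₀ (Aset q M j y ∩ {ω | ω i = y}) else 0))
        = ∑' (y : S), ∑' (j : ℕ),
            ENNReal.ofReal (q y) * (c.P x₀ (Aset q M j y) * c.green y y) :=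
          tsum_congr fun y => tsum_congr fun j => hgreen y j
      _ ≤ ∑' (y : S), ∑' (j : ℕ),
            ENNReal.ofReal (q y) * (c.P x₀ (Aset q M j y) * K) :=
          ENNReal.tsum_le_tsum fun y => ENNReal.tsum_le_tsum fun j =>
            mul_le_mul_right (mul_le_mul_right (hg y) _) _
      _ = ∑' (y : S), ∑' (j : ℕ),
            K * (ENNReal.ofReal (q y) * c.P x₀ (Aset q M j y)) :=
          tsum_congr fun y => tsum_congr fun j => by ring
      _ = K * ∑' (y : S), ∑' (j : ℕ), ENNReal.ofReal (q y) * c.P x₀ (Aset q M j y) := by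
          rw [← ENNReal.tsum_mul_left]
          exact tsum_congr fun y => by rw [← ENNReal.tsum_mul_left]
  have hb : (∫⁻ ω, SstopM q M ω ∂ c.P x₀) ≤ ENNReal.ofReal (M+1) := by
    calc (∫⁻ ω, SstopM q M ω ∂ c.P x₀)
        ≤ ∫⁻ _, ENNReal.ofReal (M+1) ∂ c.P x₀ := lintegral_mono (SstopM_le q hq M hM)
      _ = ENNReal.ofReal (M+1) := by rw [lintegral_const, measure_univ, mul_one]
  have h2 : K * (∫⁻ ω, SstopM q M ω ∂ c.P x₀) ≤ K * ENNReal.ofReal (M + 1) :=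
    mul_le_mul_right hb K
  refine ⟨h1, h2, ?_⟩
  have hmeasS : Measurable (fun ω : ℕ → S => StildeM q M ω) := by
    unfold StildeM
    exact Measurable.ennreal_tsum fun i =>
      Measurable.ite (meas_hitSet q M i)
        ((measurable_of_countable fun s => ENNReal.ofReal (q s)).comp (measurable_pi_apply i))
        measurable_const
  apply ae_lt_top hmeasS
  have hfin : K * ENNReal.ofReal (M + 1) ≠ ⊤ :=
    ENNReal.mul_ne_top hK ENNReal.ofReal_ne_top
  exact ne_top_of_le_ne_top hfin (h1.trans h2)
end

section
/- If π̃(x_0) < 1, then for any a ∈ (0,1], the level set B_a = {x : π̃(x) ≥ a} is the union of a finite set and a set transient for x_0 (i.e. a set A with P_{x_0}(X_n ∈ A for some n) < 1). -/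
open MeasureTheory ENNReal

/-- The annealed trapping probability
`π̃ (x) = P_x (X_n ∈ T_n for some n) = E_x [1 - ∏_{i=0}^∞ (1 - q (X_i))]`. -/
noncomputable def pitilde {S : Type*} [MeasurableSpace S] (c : MC S) (q : S → ℝ)
    (x : S) : ℝ≥0∞ :=
  ∫⁻ ω, (1 - ⨅ n : ℕ, ∏ i ∈ Finset.range (n + 1), ENNReal.ofReal (1 - q (ω i))) ∂ c.P x

open Filter Topology
set_option linter.unusedSectionVars false
open scoped Classical

namespace LSAux

variable {S : Type*} [MeasurableSpace S] [MeasurableSingletonClass S] [Countable S]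

/-! ### Cylinders and the π-system they generate -/

/-- cylinder set -/
def Cyl (n : ℕ) (y : ℕ → S) : Set (ℕ → S) := {ω | ∀ i ≤ n, ω i = y i}

/-- projection on the first `n+1` coordinates -/
def proj (n : ℕ) (ω : ℕ → S) : Fin (n + 1) → S := fun i => ω i

/-- extension of a finite word -/
def ext (n : ℕ) (u : Fin (n + 1) → S) : ℕ → S :=
  fun j => u ⟨min j n, Nat.lt_succ_of_le (min_le_right _ _)⟩

/-- shift on trajectories -/
def shiftω (n : ℕ) (ω : ℕ → S) : ℕ → S := fun j => ω (n + j)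

lemma measurable_shiftω (n : ℕ) : Measurable (shiftω (S := S) n) :=
  measurable_pi_lambda _ fun j => measurable_pi_apply (n + j)

/-- concatenation of two trajectories at time n -/
def splice (n : ℕ) (y z : ℕ → S) : ℕ → S := fun j => if j < n then y j else z (j - n)

lemma cyl_eq_preimage (n : ℕ) (y : ℕ → S) :
    Cyl n y = proj n ⁻¹' {fun i : Fin (n+1) => y i} := by
  ext ω
  simp only [Cyl, Set.mem_setOf_eq, Set.mem_preimage, Set.mem_singleton_iff, proj, funext_iff]
  constructor
  · intro h i; exact h i (Nat.lt_succ_iff.mp i.2)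
  · intro h i hi; exact h ⟨i, Nat.lt_succ_of_le hi⟩

lemma ext_spec (n : ℕ) (u : Fin (n + 1) → S) (i : Fin (n + 1)) : ext n u i = u i := by
  simp only [ext]
  congr 1
  ext
  simp [Nat.min_eq_left (Nat.lt_succ_iff.mp i.2)]

lemma cyl_ext (n : ℕ) (u : Fin (n + 1) → S) :
    Cyl n (ext n u) = proj n ⁻¹' {u} := by
  rw [cyl_eq_preimage]
  have : (fun i : Fin (n+1) => ext n u i) = u := funext (ext_spec n u)
  rw [this]

lemma measurableSet_cyl (n : ℕ) (y : ℕ → S) : MeasurableSet (Cyl n y) := by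
  have : Cyl n y = ⋂ (i : ℕ) (_ : i ≤ n), (fun ω : ℕ → S => ω i) ⁻¹' {y i} := by
    ext ω; simp [Cyl]
  rw [this]
  exact MeasurableSet.iInter fun i => MeasurableSet.iInter fun _ =>
    (measurable_pi_apply i) (MeasurableSet.of_discrete)

/-- the π-system of cylinders -/
def cylSys : Set (Set (ℕ → S)) := {s | ∃ n y, s = Cyl n y}

lemma isPiSystem_cylSys : IsPiSystem (cylSys (S := S)) := by
  rintro s ⟨n, y, rfl⟩ t ⟨m, z, rfl⟩ hne
  obtain ⟨ω, hω1, hω2⟩ := hne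
  rcases le_total n m with hnm | hmn
  · refine ⟨m, z, ?_⟩
    ext ω'
    constructor
    · rintro ⟨-, h2⟩; exact h2
    · intro h2
      refine ⟨fun i hi => ?_, h2⟩
      rw [h2 i (hi.trans hnm), ← hω2 i (hi.trans hnm), hω1 i hi]
  · refine ⟨n, y, ?_⟩
    ext ω'
    constructor
    · rintro ⟨h1, -⟩; exact h1
    · intro h1
      refine ⟨h1, fun i hi => ?_⟩
      rw [h1 i (hi.trans hmn), ← hω1 i (hi.trans hmn), hω2 i hi]

lemma preimage_eval_mem (i : ℕ) (t : Set S) :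
    (fun ω : ℕ → S => ω i) ⁻¹' t
      = ⋃ (u : {u : Fin (i+1) → S // u (Fin.last i) ∈ t}), proj i ⁻¹' {(u : Fin (i+1) → S)} := by
  ext ω
  simp only [Set.mem_preimage, Set.mem_iUnion, Set.mem_singleton_iff]
  constructor
  · intro h
    exact ⟨⟨proj i ω, h⟩, rfl⟩
  · rintro ⟨⟨u, hu⟩, rfl⟩
    exact hu

lemma generateFrom_cylSys :
    (inferInstance : MeasurableSpace (ℕ → S)) = MeasurableSpace.generateFrom cylSys := by
  refine le_antisymm ?_ ?_
  · have : ∀ i : ℕ, MeasurableSpace.comap (fun ω : ℕ → S => ω i) ‹MeasurableSpace S›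
        ≤ MeasurableSpace.generateFrom (cylSys (S := S)) := by
      intro i
      rintro s ⟨t, -, rfl⟩
      rw [preimage_eval_mem]
      refine MeasurableSet.iUnion fun u => ?_
      rw [← cyl_ext]
      exact MeasurableSpace.measurableSet_generateFrom ⟨i, ext i u, rfl⟩
    exact iSup_le this
  · refine MeasurableSpace.generateFrom_le ?_
    rintro s ⟨n, y, rfl⟩
    exact measurableSet_cyl n y

/-! ### The law of cylinders and the Markov property -/

lemma measure_cyl (c : MC S) (x : S) (n : ℕ) (y : ℕ → S) :
    c.P x (Cyl n y) = (if y 0 = x then 1 else 0)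
      * ∏ i ∈ Finset.range n, c.p (y i) (y (i + 1)) := by
  haveI := c.prob x
  induction n with
  | zero =>
    have h0 : Cyl 0 y = {ω : ℕ → S | ω 0 = y 0} := by
      ext ω; simp [Cyl, Nat.le_zero]
    rw [h0]
    by_cases h : y 0 = x
    · rw [if_pos h]
      simp only [Finset.range_zero, Finset.prod_empty, mul_one, one_mul]
      rw [h, c.start x]
    · simp only [h, if_false, Finset.range_zero, Finset.prod_empty, mul_one, zero_mul]
      have hsub : {ω : ℕ → S | ω 0 = y 0} ⊆ {ω : ℕ → S | ω 0 = x}ᶜ := by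
        intro ω hω hx
        exact h (hω ▸ hx)
      refine le_antisymm ?_ zero_le
      have hms : MeasurableSet {ω : ℕ → S | ω 0 = x} :=
        by
          have : {ω : ℕ → S | ω 0 = x} = (fun ω : ℕ → S => ω 0) ⁻¹' {x} := rfl
          rw [this]; exact (measurable_pi_apply 0) (MeasurableSet.of_discrete)
      calc c.P x {ω : ℕ → S | ω 0 = y 0} ≤ c.P x {ω : ℕ → S | ω 0 = x}ᶜ := measure_mono hsub
      _ = 1 - c.P x {ω : ℕ → S | ω 0 = x} := by
          rw [measure_compl hms (measure_ne_top _ _), measure_univ]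
      _ = 0 := by rw [c.start x, tsub_self]
  | succ n ih =>
    have : Cyl (n+1) y = {ω : ℕ → S | ∀ i ≤ n + 1, ω i = y i} := rfl
    have hn : {ω : ℕ → S | ∀ i ≤ n, ω i = y i} = Cyl n y := rfl
    rw [this, c.markov x n y, hn, ih, Finset.prod_range_succ, mul_assoc]

lemma splice_le {n : ℕ} {y z : ℕ → S} (hz : z 0 = y n) {j : ℕ} (hj : j ≤ n) :
    splice n y z j = y j := by
  rcases lt_or_eq_of_le hj with h | h
  · simp [splice, h]
  · subst h; simp [splice, hz]

lemma splice_add {n : ℕ} {y z : ℕ → S} (j : ℕ) : splice n y z (n + j) = z j := by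
  simp [splice]

lemma cyl_inter_shift {n m : ℕ} {y z : ℕ → S} (hz : z 0 = y n) :
    Cyl n y ∩ shiftω n ⁻¹' Cyl m z = Cyl (n + m) (splice n y z) := by
  ext ω
  simp only [Cyl, Set.mem_inter_iff, Set.mem_setOf_eq, Set.mem_preimage, shiftω]
  constructor
  · rintro ⟨h1, h2⟩ i hi
    by_cases h : i ≤ n
    · rw [splice_le hz h]; exact h1 i h
    · have : i = n + (i - n) := by omega
      rw [this, splice_add]
      exact h2 (i - n) (by omega)
  · intro h
    refine ⟨fun i hi => by rw [h i (by omega), splice_le hz hi], fun j hj => ?_⟩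
    rw [h (n + j) (by omega), splice_add]

lemma cyl_inter_shift_empty {n m : ℕ} {y z : ℕ → S} (hz : z 0 ≠ y n) :
    Cyl n y ∩ shiftω n ⁻¹' Cyl m z = ∅ := by
  ext ω
  simp only [Cyl, Set.mem_inter_iff, Set.mem_setOf_eq, Set.mem_preimage, shiftω,
    Set.mem_empty_iff_false, iff_false]
  rintro ⟨h1, h2⟩
  exact hz ((h2 0 (Nat.zero_le _)).symm.trans (by rw [Nat.add_zero]; exact h1 n le_rfl))

lemma prod_splice {n m : ℕ} {y z : ℕ → S} (hz : z 0 = y n) (p : S → S → ℝ≥0∞) :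
    ∏ i ∈ Finset.range (n + m), p (splice n y z i) (splice n y z (i + 1))
      = (∏ i ∈ Finset.range n, p (y i) (y (i + 1)))
        * ∏ j ∈ Finset.range m, p (z j) (z (j + 1)) := by
  rw [Finset.prod_range_add]
  congr 1
  · refine Finset.prod_congr rfl fun i hi => ?_
    have hi' : i < n := Finset.mem_range.mp hi
    rw [splice_le hz (by omega), splice_le hz (by omega)]
  · refine Finset.prod_congr rfl fun j hj => ?_
    have : n + j + 1 = n + (j + 1) := by omega
    rw [splice_add, this, splice_add]

lemma splice_zero {n : ℕ} {y z : ℕ → S} (hz : z 0 = y n) : splice n y z 0 = y 0 :=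
  splice_le hz (Nat.zero_le _)

/-- The Markov property at a deterministic time, as a statement about the shifted measure. -/
lemma map_shift (c : MC S) (x : S) (n : ℕ) (y : ℕ → S) :
    ((c.P x).restrict (Cyl n y)).map (shiftω n) = c.P x (Cyl n y) • c.P (y n) := by
  haveI := c.prob x
  haveI := c.prob (y n)
  haveI h1 : IsFiniteMeasure (((c.P x).restrict (Cyl n y)).map (shiftω n)) := by
    constructor
    rw [Measure.map_apply (measurable_shiftω n) MeasurableSet.univ, Set.preimage_univ,
      Measure.restrict_apply_univ]
    exact measure_lt_top _ _
  haveI h2 : IsFiniteMeasure (c.P x (Cyl n y) • c.P (y n)) := by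
    constructor
    rw [Measure.smul_apply, smul_eq_mul]
    exact ENNReal.mul_lt_top (measure_lt_top _ _) (measure_lt_top _ _)
  refine MeasureTheory.ext_of_generate_finite cylSys generateFrom_cylSys isPiSystem_cylSys ?_ ?_
  · rintro s ⟨m, z, rfl⟩
    rw [Measure.map_apply (measurable_shiftω n) (measurableSet_cyl m z),
      Measure.restrict_apply ((measurable_shiftω n) (measurableSet_cyl m z)),
      Set.inter_comm, Measure.smul_apply, smul_eq_mul]
    by_cases hz : z 0 = y n
    · rw [cyl_inter_shift hz, measure_cyl, measure_cyl, measure_cyl, prod_splice hz,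
        splice_zero hz, if_pos hz]
      ring
    · rw [cyl_inter_shift_empty hz, measure_cyl, measure_cyl, if_neg hz, measure_empty]
      ring
  · rw [Measure.map_apply (measurable_shiftω n) MeasurableSet.univ, Set.preimage_univ,
      Measure.restrict_apply_univ, Measure.smul_apply, smul_eq_mul, measure_univ, mul_one]

/-! ### The non-trapping product functional -/

noncomputable def fq (q : S → ℝ) (s : S) : ℝ≥0∞ := ENNReal.ofReal (1 - q s)
noncomputable def gpre (q : S → ℝ) (n : ℕ) (ω : ℕ → S) : ℝ≥0∞ :=
  ∏ i ∈ Finset.range n, fq q (ω i)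
noncomputable def hfun (q : S → ℝ) (ω : ℕ → S) : ℝ≥0∞ := ⨅ n : ℕ, gpre q (n + 1) ω
noncomputable def rr (c : MC S) (q : S → ℝ) (x : S) : ℝ≥0∞ := ∫⁻ ω, hfun q ω ∂ c.P x
noncomputable def phi (c : MC S) (q : S → ℝ) (n : ℕ) (ω : ℕ → S) : ℝ≥0∞ :=
  gpre q n ω * rr c q (ω n)

section Hq

variable {q : S → ℝ}

lemma iInf_shift {u : ℕ → ℝ≥0∞} (hu : Antitone u) (n : ℕ) : ⨅ m, u (n + m) = ⨅ m, u m :=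
  le_antisymm (le_iInf fun m => (iInf_le _ m).trans (hu (Nat.le_add_left m n)))
    (le_iInf fun m => iInf_le _ (n + m))

lemma gpre_add (n m : ℕ) (ω : ℕ → S) :
    gpre q (n + m) ω = gpre q n ω * gpre q m (shiftω n ω) := by
  rw [gpre, gpre, gpre, Finset.prod_range_add]
  rfl

lemma measurable_gpre (n : ℕ) : Measurable (gpre q n) :=
  Finset.measurable_prod _ fun i _ =>
    (measurable_of_countable (fq q)).comp (measurable_pi_apply i)

lemma measurable_hfun : Measurable (hfun q) :=
  Measurable.iInf fun n => measurable_gpre (n + 1)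

variable (hq : ∀ s, 0 ≤ q s ∧ q s < 1)
include hq

lemma fq_le_one (s : S) : fq q s ≤ 1 := by
  rw [fq, ← ENNReal.ofReal_one]
  exact ENNReal.ofReal_le_ofReal (by linarith [(hq s).1])

lemma fq_pos (s : S) : 0 < fq q s := by
  rw [fq]
  exact ENNReal.ofReal_pos.mpr (by linarith [(hq s).2])

lemma gpre_le_one (n : ℕ) (ω : ℕ → S) : gpre q n ω ≤ 1 :=
  Finset.prod_le_one (fun _ _ => zero_le) (fun i _ => fq_le_one hq _)

lemma gpre_ne_top (n : ℕ) (ω : ℕ → S) : gpre q n ω ≠ ∞ :=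
  ((gpre_le_one hq n ω).trans_lt one_lt_top).ne

lemma gpre_ne_zero (n : ℕ) (ω : ℕ → S) : gpre q n ω ≠ 0 := by
  rw [gpre, Finset.prod_ne_zero_iff]
  exact fun i _ => (fq_pos hq _).ne'

lemma gpre_antitone (ω : ℕ → S) : Antitone fun n => gpre q n ω := by
  refine antitone_nat_of_succ_le fun n => ?_
  rw [gpre, Finset.prod_range_succ]
  calc (∏ i ∈ Finset.range n, fq q (ω i)) * fq q (ω n)
      ≤ (∏ i ∈ Finset.range n, fq q (ω i)) * 1 := mul_le_mul_right (fq_le_one hq _) _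
    _ = gpre q n ω := mul_one _

lemma hfun_eq (ω : ℕ → S) : hfun q ω = ⨅ n, gpre q n ω := by
  refine le_antisymm (le_iInf fun n => ?_) (le_iInf fun n => iInf_le _ (n + 1))
  exact (iInf_le _ n).trans (gpre_antitone hq ω (Nat.le_succ n))

lemma hfun_le_one (ω : ℕ → S) : hfun q ω ≤ 1 :=
  (iInf_le _ 0).trans (gpre_le_one hq _ _)

lemma hfun_ne_top (ω : ℕ → S) : hfun q ω ≠ ∞ :=
  ((hfun_le_one hq ω).trans_lt one_lt_top).ne

lemma tendsto_gpre (ω : ℕ → S) :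
    Tendsto (fun n => gpre q n ω) atTop (𝓝 (hfun q ω)) := by
  rw [hfun_eq hq]
  exact tendsto_atTop_iInf (gpre_antitone hq ω)

lemma hfun_shift (n : ℕ) (ω : ℕ → S) :
    hfun q ω = gpre q n ω * hfun q (shiftω n ω) := by
  rw [hfun_eq hq, hfun_eq hq, ← iInf_shift (gpre_antitone hq ω) n]
  have : ∀ m, gpre q (n + m) ω = gpre q n ω * gpre q m (shiftω n ω) := fun m => gpre_add n m ω
  simp_rw [this]
  rw [ENNReal.mul_iInf_of_ne (gpre_ne_zero hq n ω) (gpre_ne_top hq n ω)]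

/-! ### Integral identities on cylinders -/

lemma rr_le_one (c : MC S) (x : S) : rr c q x ≤ 1 := by
  haveI := c.prob x
  rw [rr]
  calc ∫⁻ ω, hfun q ω ∂ c.P x ≤ ∫⁻ _, 1 ∂ c.P x := lintegral_mono (hfun_le_one hq (q := q))
    _ = 1 := by simp

omit hq in
lemma measurable_phi (c : MC S) (n : ℕ) : Measurable (phi c q n) :=
  (measurable_gpre (q := q) n).mul
    ((measurable_of_countable (rr c q)).comp (measurable_pi_apply n))

omit hq in
lemma gpre_eq_on_cyl (n : ℕ) (y : ℕ → S) {ω : ℕ → S} (hω : ω ∈ Cyl n y) :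
    gpre q n ω = ∏ i ∈ Finset.range n, fq q (y i) := by
  rw [gpre]
  exact Finset.prod_congr rfl fun i hi =>
    congrArg (fq q) (hω i (le_of_lt (Finset.mem_range.mp hi)))

lemma lint_cyl_hfun (c : MC S) (x : S) (n : ℕ) (y : ℕ → S) :
    ∫⁻ ω in Cyl n y, hfun q ω ∂ c.P x
      = (∏ i ∈ Finset.range n, fq q (y i)) * rr c q (y n) * c.P x (Cyl n y) := by
  have hcongr : ∀ ω ∈ Cyl n y,
      hfun q ω = (∏ i ∈ Finset.range n, fq q (y i)) * hfun q (shiftω n ω) := by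
    intro ω hω
    rw [hfun_shift hq n ω, gpre_eq_on_cyl n y hω]
  have hm : Measurable fun ω : ℕ → S => hfun q (shiftω n ω) :=
    (measurable_hfun (q := q)).comp (measurable_shiftω n)
  rw [setLIntegral_congr_fun (measurableSet_cyl n y) hcongr,
    lintegral_const_mul _ hm]
  have : ∫⁻ ω in Cyl n y, hfun q (shiftω n ω) ∂ c.P x
      = ∫⁻ ω', hfun q ω' ∂ (((c.P x).restrict (Cyl n y)).map (shiftω n)) := by
    rw [lintegral_map (measurable_hfun (q := q)) (measurable_shiftω n)]
  rw [this, map_shift, lintegral_smul_measure]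
  rw [← rr]
  ring

omit hq in
lemma lint_cyl_phi (c : MC S) (x : S) (n : ℕ) (y : ℕ → S) :
    ∫⁻ ω in Cyl n y, phi c q n ω ∂ c.P x
      = (∏ i ∈ Finset.range n, fq q (y i)) * rr c q (y n) * c.P x (Cyl n y) := by
  have hcongr : ∀ ω ∈ Cyl n y,
      phi c q n ω = (∏ i ∈ Finset.range n, fq q (y i)) * rr c q (y n) := by
    intro ω hω
    rw [phi, gpre_eq_on_cyl n y hω, hω n le_rfl]
  rw [setLIntegral_congr_fun (measurableSet_cyl n y) hcongr,
    setLIntegral_const]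

omit hq in
lemma preimage_eq_iUnion (n : ℕ) (t : Set (Fin (n + 1) → S)) :
    proj n ⁻¹' t = ⋃ (u : t), proj n ⁻¹' {(u : Fin (n+1) → S)} := by
  ext ω
  simp only [Set.mem_preimage, Set.mem_iUnion, Set.mem_singleton_iff]
  exact ⟨fun h => ⟨⟨proj n ω, h⟩, rfl⟩, by rintro ⟨⟨u, hu⟩, rfl⟩; exact hu⟩

lemma lint_filt (c : MC S) (x : S) (n : ℕ) (t : Set (Fin (n + 1) → S)) :
    ∫⁻ ω in proj n ⁻¹' t, hfun q ω ∂ c.P x = ∫⁻ ω in proj n ⁻¹' t, phi c q n ω ∂ c.P x := by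
  have hms : ∀ u : t, MeasurableSet (proj n ⁻¹' {(u : Fin (n+1) → S)}) := by
    intro u
    rw [← cyl_ext]
    exact measurableSet_cyl _ _
  have hdisj : Pairwise (Function.onFun Disjoint
      fun u : t => proj n ⁻¹' {(u : Fin (n+1) → S)}) := by
    intro u v huv
    rw [Function.onFun, Set.disjoint_left]
    intro ω h1 h2
    simp only [Set.mem_preimage, Set.mem_singleton_iff] at h1 h2
    exact huv (Subtype.ext (h1.symm.trans h2))
  rw [preimage_eq_iUnion, lintegral_iUnion hms hdisj, lintegral_iUnion hms hdisj]
  refine tsum_congr fun u => ?_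
  have e : proj n ⁻¹' {(u : Fin (n+1) → S)} = Cyl n (ext n u) :=
    (cyl_ext n (u : Fin (n+1) → S)).symm
  rw [e, lint_cyl_hfun hq c x n (ext n u), lint_cyl_phi c x n (ext n u)]

end Hq

/-! ### Filtration of coordinates and Lévy's upwards theorem -/

def filt (n : ℕ) : MeasurableSpace (ℕ → S) := MeasurableSpace.comap (proj n) ⊤

lemma filt_le (n : ℕ) : filt (S := S) n ≤ (inferInstance : MeasurableSpace (ℕ → S)) := by
  rintro s ⟨t, -, rfl⟩
  rw [preimage_eq_iUnion]
  refine MeasurableSet.iUnion fun u => ?_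
  rw [← cyl_ext]
  exact measurableSet_cyl _ _

lemma filt_mono : Monotone (filt (S := S)) := by
  intro n m hnm
  rintro s ⟨t, -, rfl⟩
  refine ⟨(fun v : Fin (m+1) → S => fun i : Fin (n+1) =>
      v ⟨(i : ℕ), by omega⟩) ⁻¹' t, trivial, rfl⟩

noncomputable def filtration : Filtration ℕ (inferInstance : MeasurableSpace (ℕ → S)) where
  seq := filt
  mono' := filt_mono
  le' := filt_le

lemma iSup_filt : (⨆ n, filt (S := S) n) = (inferInstance : MeasurableSpace (ℕ → S)) := by
  refine le_antisymm (iSup_le filt_le) ?_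
  have : ∀ i : ℕ, MeasurableSpace.comap (fun ω : ℕ → S => ω i) ‹MeasurableSpace S›
      ≤ ⨆ n, filt (S := S) n := by
    intro i
    refine le_trans ?_ (le_iSup (filt (S := S)) i)
    rintro s ⟨t, -, rfl⟩
    exact ⟨(fun v : Fin (i+1) → S => v (Fin.last i)) ⁻¹' t, trivial, rfl⟩
  exact iSup_le this

section Levy

variable {q : S → ℝ} (hq : ∀ s, 0 ≤ q s ∧ q s < 1) (c : MC S) (x₀ : S)
include hq

lemma phi_le_one (n : ℕ) (ω : ℕ → S) : phi c q n ω ≤ 1 :=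
  mul_le_one' (gpre_le_one hq n ω) (rr_le_one hq c _)

lemma integrable_Hre : Integrable (fun ω => (hfun q ω).toReal) (c.P x₀) := by
  haveI := c.prob x₀
  refine Integrable.mono' (integrable_const (1:ℝ))
    (measurable_hfun (q := q)).ennreal_toReal.aestronglyMeasurable
    (Filter.Eventually.of_forall fun ω => ?_)
  show ‖(hfun q ω).toReal‖ ≤ 1
  rw [Real.norm_eq_abs, abs_of_nonneg ENNReal.toReal_nonneg]
  exact ENNReal.toReal_le_of_le_ofReal zero_le_one (by simpa using hfun_le_one hq (q := q) ω)

lemma integrable_Phire (n : ℕ) : Integrable (fun ω => (phi c q n ω).toReal) (c.P x₀) := by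
  haveI := c.prob x₀
  refine Integrable.mono' (integrable_const (1:ℝ))
    (measurable_phi c n).ennreal_toReal.aestronglyMeasurable
    (Filter.Eventually.of_forall fun ω => ?_)
  show ‖(phi c q n ω).toReal‖ ≤ 1
  rw [Real.norm_eq_abs, abs_of_nonneg ENNReal.toReal_nonneg]
  exact ENNReal.toReal_le_of_le_ofReal zero_le_one (by simpa using phi_le_one hq c n ω)

lemma condexp_phi (n : ℕ) :
    (fun ω => (phi c q n ω).toReal)
      =ᵐ[c.P x₀] (c.P x₀)[fun ω => (hfun q ω).toReal | filtration n] := by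
  haveI := c.prob x₀
  haveI : SigmaFinite ((c.P x₀).trim (filt_le (S := S) n)) := by
    haveI : IsFiniteMeasure ((c.P x₀).trim (filt_le (S := S) n)) :=
      isFiniteMeasure_trim _
    infer_instance
  refine ae_eq_condExp_of_forall_setIntegral_eq (filt_le n) (integrable_Hre hq c x₀)
    (fun s _ _ => (integrable_Phire hq c x₀ n).integrableOn) ?_ ?_
  · rintro s ⟨t, -, rfl⟩ -
    have h1 : ∫ ω in proj n ⁻¹' t, (phi c q n ω).toReal ∂ c.P x₀
        = (∫⁻ ω in proj n ⁻¹' t, phi c q n ω ∂ c.P x₀).toReal := by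
      rw [integral_eq_lintegral_of_nonneg_ae (Filter.Eventually.of_forall fun ω =>
        ENNReal.toReal_nonneg) (measurable_phi c n).ennreal_toReal.aestronglyMeasurable]
      congr 1
      refine lintegral_congr fun ω => ?_
      rw [ENNReal.ofReal_toReal ((phi_le_one hq c n ω).trans_lt one_lt_top).ne]
    have h2 : ∫ ω in proj n ⁻¹' t, (hfun q ω).toReal ∂ c.P x₀
        = (∫⁻ ω in proj n ⁻¹' t, hfun q ω ∂ c.P x₀).toReal := by
      rw [integral_eq_lintegral_of_nonneg_ae (Filter.Eventually.of_forall fun ω =>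
        ENNReal.toReal_nonneg) (measurable_hfun (q := q)).ennreal_toReal.aestronglyMeasurable]
      congr 1
      refine lintegral_congr fun ω => ?_
      rw [ENNReal.ofReal_toReal ((hfun_le_one hq (q := q) ω).trans_lt one_lt_top).ne]
    rw [h1, h2, lint_filt hq]
  · have hfe : (fun ω => (phi c q n ω).toReal) = (fun v : Fin (n+1) → S =>
        ((∏ i ∈ Finset.range n, fq q (v ⟨min i n, Nat.lt_succ_of_le (min_le_right _ _)⟩))
          * rr c q (v (Fin.last n))).toReal) ∘ proj n := by
      funext ω
      show ((gpre q n ω) * rr c q (ω n)).toReal = _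
      simp only [Function.comp_apply]
      congr 2
      refine Finset.prod_congr rfl fun i hi => ?_
      show fq q (ω i) = fq q (ω (min i n))
      rw [min_eq_left (le_of_lt (Finset.mem_range.mp hi))]
    refine StronglyMeasurable.aestronglyMeasurable (Measurable.stronglyMeasurable ?_)
    rw [hfe]
    intro u hu
    exact ⟨_ ⁻¹' u, trivial, Set.preimage_comp.symm⟩

lemma levy : ∀ᵐ ω ∂ c.P x₀,
    Tendsto (fun n => (phi c q n ω).toReal) atTop (𝓝 ((hfun q ω).toReal)) := by
  haveI := c.prob x₀
  have hmeas : StronglyMeasurable[⨆ n, filtration (S := S) n]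
      (fun ω => (hfun q ω).toReal) := by
    have : (⨆ n, filtration (S := S) n) = (inferInstance : MeasurableSpace (ℕ → S)) :=
      iSup_filt
    rw [this]
    exact (measurable_hfun (q := q)).ennreal_toReal.stronglyMeasurable
  have h1 := (integrable_Hre hq c x₀ (q := q)).tendsto_ae_condExp hmeas
  have h2 : ∀ᵐ ω ∂ c.P x₀, ∀ n, (phi c q n ω).toReal
      = ((c.P x₀)[fun ω => (hfun q ω).toReal | filtration n]) ω :=
    ae_all_iff.mpr fun n => condexp_phi hq c x₀ n
  filter_upwards [h1, h2] with ω hω1 hω2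
  have : (fun n => (phi c q n ω).toReal)
      = fun n => ((c.P x₀)[fun ω => (hfun q ω).toReal | filtration n]) ω :=
    funext hω2
  rw [this]
  exact hω1

/-! ### Relation between `pitilde` and `rr` -/

lemma pitilde_eq (x : S) : pitilde c q x = 1 - rr c q x := by
  haveI := c.prob x
  have : pitilde c q x = ∫⁻ ω, ((fun _ => (1:ℝ≥0∞)) ω - hfun q ω) ∂ c.P x := rfl
  rw [this, lintegral_sub (measurable_hfun (q := q))
    (((lintegral_mono (hfun_le_one hq)).trans_lt (by simp)).ne)
    (Filter.Eventually.of_forall (hfun_le_one hq))]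
  simp [rr]

lemma rr_eq (x : S) : rr c q x = 1 - pitilde c q x := by
  rw [pitilde_eq hq c x, ENNReal.sub_sub_cancel one_ne_top (rr_le_one hq c x)]

end Levy
end LSAux

/-- If `π̃ (x₀) < 1`, then for any `a ∈ (0, 1]` the level set
`B_a = {x : π̃ (x) ≥ a}` is the union of a finite set and a set transient for `x₀`,
where `A ⊆ S` is transient for `x₀` if `P_{x₀} (X_n ∈ A for some n) < 1`. -/
theorem level_set_finite_union_transient
    {S : Type*} [MeasurableSpace S] [MeasurableSingletonClass S] [Countable S]
    (c : MC S) (q : S → ℝ) (hq : ∀ s, 0 ≤ q s ∧ q s < 1)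
    (x₀ : S) (hx₀ : pitilde c q x₀ < 1)
    (a : ℝ≥0∞) (ha : 0 < a) (ha' : a ≤ 1) :
    ∃ F A : Set S, F.Finite ∧ {x | a ≤ pitilde c q x} = F ∪ A ∧
      c.P x₀ {ω | ∃ n, ω n ∈ A} < 1 := by
  classical
  open LSAux in
  haveI := c.prob x₀
  haveI : Nonempty S := ⟨x₀⟩
  set μ := c.P x₀ with hμ
  set Ba : Set S := {x | a ≤ pitilde c q x} with hBadef
  obtain ⟨e, he⟩ := exists_surjective_nat S
  set F : ℕ → Set S := fun k => Ba ∩ (e '' Set.Iio k) with hFdef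
  set E : ℕ → Set (ℕ → S) := fun k => {ω | ∃ n, ω n ∈ Ba \ F k} with hEdef
  have hE_meas : ∀ k, MeasurableSet (E k) := by
    intro k
    have : E k = ⋃ n, (fun ω : ℕ → S => ω n) ⁻¹' (Ba \ F k) := by
      ext ω; simp [hEdef]
    rw [this]
    exact MeasurableSet.iUnion fun n => (measurable_pi_apply n) .of_discrete
  have hF_mono : Monotone F := by
    intro k l hkl
    exact Set.inter_subset_inter_right _ (Set.image_mono (Set.Iio_subset_Iio hkl))
  have hE_anti : Antitone E := by
    intro k l hkl ω hω
    obtain ⟨n, hn1, hn2⟩ := hω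
    exact ⟨n, hn1, fun hF => hn2 (hF_mono hkl hF)⟩
  have hrB : ∀ x ∈ Ba, (rr c q x).toReal ≤ 1 - a.toReal := by
    intro x hx
    have h1 : rr c q x ≤ 1 - a := by
      rw [rr_eq hq c x]
      exact tsub_le_tsub_left hx 1
    calc (rr c q x).toReal ≤ (1 - a).toReal := ENNReal.toReal_mono (by simp) h1
      _ = 1 - a.toReal := by
          rw [ENNReal.toReal_sub_of_le ha' (by simp)]
          simp
  have halt : (0:ℝ) < a.toReal := ENNReal.toReal_pos ha.ne' (ha'.trans_lt (by simp)).ne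
  have key : ∀ᵐ ω ∂μ, ω ∈ ⋂ k, E k → hfun q ω = 0 := by
    filter_upwards [levy hq c x₀] with ω hlevy
    intro hω
    by_contra h0
    have hpos : 0 < (hfun q ω).toReal := ENNReal.toReal_pos h0 (hfun_ne_top hq ω)
    have hg : Tendsto (fun n => (gpre q n ω).toReal) atTop (𝓝 (hfun q ω).toReal) :=
      (ENNReal.tendsto_toReal (hfun_ne_top hq ω)).comp (tendsto_gpre hq ω)
    have hphi : Tendsto (fun n => (gpre q n ω).toReal * (rr c q (ω n)).toReal)
        atTop (𝓝 (hfun q ω).toReal) := by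
      have : (fun n => (phi c q n ω).toReal)
          = fun n => (gpre q n ω).toReal * (rr c q (ω n)).toReal := by
        funext n; rw [phi, ENNReal.toReal_mul]
      rwa [this] at hlevy
    have hrn : Tendsto (fun n => (rr c q (ω n)).toReal) atTop (𝓝 1) := by
      have hdiv := hphi.div hg hpos.ne'
      rw [div_self hpos.ne'] at hdiv
      refine Filter.Tendsto.congr (fun n => ?_) hdiv
      have hne : (gpre q n ω).toReal ≠ 0 :=
        ENNReal.toReal_ne_zero.mpr ⟨gpre_ne_zero hq n ω, gpre_ne_top hq n ω⟩
      rw [Pi.div_apply]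
      field_simp
    have hev : ∀ᶠ n in atTop, 1 - a.toReal < (rr c q (ω n)).toReal :=
      hrn.eventually_const_lt (by linarith)
    obtain ⟨N, hN⟩ := eventually_atTop.mp hev
    have hnotBa : ∀ n ≥ N, ω n ∉ Ba := by
      intro n hn hBa
      exact absurd (hrB _ hBa) (not_le.mpr (hN n hn))
    obtain ⟨k, hcover⟩ : ∃ k, ∀ n < N, ω n ∈ Ba → ω n ∈ F k := by
      refine ⟨(Finset.range N).sup fun n => Classical.choose (he (ω n)) + 1, ?_⟩
      intro n hn hBa
      have hle : Classical.choose (he (ω n)) + 1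
          ≤ (Finset.range N).sup fun n => Classical.choose (he (ω n)) + 1 :=
        Finset.le_sup (f := fun n => Classical.choose (he (ω n)) + 1)
          (Finset.mem_range.mpr hn)
      exact ⟨hBa, Classical.choose (he (ω n)), Set.mem_Iio.mpr (by omega),
        Classical.choose_spec (he (ω n))⟩
    obtain ⟨n, hn1, hn2⟩ := Set.mem_iInter.mp hω k
    rcases lt_or_ge n N with h | h
    · exact hn2 (hcover n h hn1)
    · exact hnotBa n h hn1
  have hzero_le : μ {ω | hfun q ω = 0} ≤ pitilde c q x₀ := by
    have hms : MeasurableSet {ω : ℕ → S | hfun q ω = 0} :=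
      measurable_hfun (measurableSet_singleton 0)
    have hsplit : μ {ω | hfun q ω = 0} + μ {ω | hfun q ω = 0}ᶜ = 1 :=
      (measure_add_measure_compl hms).trans measure_univ
    have hrle : rr c q x₀ ≤ μ {ω | hfun q ω = 0}ᶜ := by
      rw [rr, hμ]
      calc ∫⁻ ω, hfun q ω ∂ c.P x₀
          ≤ ∫⁻ ω, ({ω : ℕ → S | hfun q ω = 0}ᶜ).indicator (fun _ => 1) ω ∂ c.P x₀ := by
            refine lintegral_mono fun ω => ?_
            by_cases h : hfun q ω = 0
            · simp [h]
            · rw [Set.indicator_of_mem (by simpa using h)]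
              exact hfun_le_one hq ω
        _ = c.P x₀ {ω : ℕ → S | hfun q ω = 0}ᶜ := lintegral_indicator_one hms.compl
    have h1 : μ {ω | hfun q ω = 0} = 1 - μ {ω | hfun q ω = 0}ᶜ :=
      ENNReal.eq_sub_of_add_eq (measure_ne_top _ _) hsplit
    rw [h1, pitilde_eq hq c x₀]
    exact tsub_le_tsub_left hrle 1
  have hinter : μ (⋂ k, E k) < 1 := by
    refine lt_of_le_of_lt ?_ (lt_of_le_of_lt hzero_le hx₀)
    refine measure_mono_ae ?_
    filter_upwards [key] with ω hω h
    exact hω h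
  have htend := tendsto_measure_iInter_atTop (μ := μ)
    (fun k => (hE_meas k).nullMeasurableSet) hE_anti ⟨0, measure_ne_top μ _⟩
  have hev : ∀ᶠ k in Filter.atTop, μ (E k) < 1 := htend.eventually_lt_const hinter
  obtain ⟨k, hk⟩ := hev.exists
  refine ⟨F k, Ba \ F k, ?_, ?_, ?_⟩
  · exact Set.Finite.inter_of_right ((Set.finite_Iio k).image e) Ba
  · exact (Set.union_diff_cancel Set.inter_subset_left).symm
  · exact hk
end

section
/- Consider the Markov chain on S = {2,3,4,...} with p(n,n+1) = 1/n and p(n,n) = 1 − 1/n. Conditional on reaching site n untrapped, the annealed field traps the chain during its sojourn at n with probability n q(n)/(n q(n) + 1 − q(n)); consequently the annealed field is trapping if and only if Σ_n n·q(n) = ∞. -/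
open ENNReal Finset

/-- `1 - ∑ ≤ ∏ (1 - a)` for nonnegative `a`. -/
private lemma one_sub_sum_le_prod (a : ℕ → ℝ) (h0 : ∀ n, 0 ≤ a n) (h1 : ∀ n, a n ≤ 1)
    (s : Finset ℕ) : 1 - ∑ n ∈ s, a n ≤ ∏ n ∈ s, (1 - a n) := by
  classical
  induction s using Finset.induction_on with
  | empty => simp
  | @insert i s hi ih =>
    rw [Finset.sum_insert hi, Finset.prod_insert hi]
    have hs : 0 ≤ ∑ n ∈ s, a n := Finset.sum_nonneg fun n _ => h0 n
    nlinarith [h0 i, h1 i, ih]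

private lemma prod_le_exp_neg_sum (a : ℕ → ℝ) (h0 : ∀ n, 0 ≤ a n) (h1 : ∀ n, a n ≤ 1)
    (s : Finset ℕ) : ∏ n ∈ s, (1 - a n) ≤ Real.exp (-(∑ n ∈ s, a n)) := by
  rw [← Finset.sum_neg_distrib, Real.exp_sum]
  refine Finset.prod_le_prod (fun n _ => by linarith [h1 n]) (fun n _ => ?_)
  linarith [Real.add_one_le_exp (-(a n))]

/-- Key general lemma. -/
private lemma iInf_prod_eq_zero_iff (a : ℕ → ℝ) (h0 : ∀ n, 0 ≤ a n) (h1 : ∀ n, a n < 1) :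
    (⨅ N : ℕ, ∏ n ∈ Finset.range N, (1 - a n)) = 0 ↔ ¬ Summable a := by
  have hbdd : BddBelow (Set.range fun N => ∏ n ∈ Finset.range N, (1 - a n)) := by
    refine ⟨0, ?_⟩
    rintro x ⟨N, rfl⟩
    exact Finset.prod_nonneg fun n _ => by linarith [h1 n]
  constructor
  · -- iInf = 0 → not summable; contrapositive
    intro hz hsum
    -- pick N₀ with tail sums ≤ 1/2
    have hc : CauchySeq (fun N => ∑ n ∈ Finset.range N, a n) :=
      hsum.hasSum.tendsto_sum_nat.cauchySeq
    obtain ⟨N₀, hN₀⟩ := Metric.cauchySeq_iff'.1 hc (1/2) (by norm_num)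
    have htail : ∀ N, N₀ ≤ N → ∑ n ∈ Finset.Ico N₀ N, a n ≤ 1/2 := by
      intro N hN
      have := hN₀ N hN
      rw [Real.dist_eq] at this
      have hsub : ∑ n ∈ Finset.Ico N₀ N, a n
          = ∑ n ∈ Finset.range N, a n - ∑ n ∈ Finset.range N₀, a n :=
        Finset.sum_Ico_eq_sub _ hN
      rw [hsub]
      exact le_of_lt (lt_of_le_of_lt (le_abs_self _) this)
    set P₀ := ∏ n ∈ Finset.range N₀, (1 - a n) with hP₀
    have hP₀pos : 0 < P₀ := Finset.prod_pos fun n _ => by linarith [h1 n]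
    have hlow : ∀ N, P₀ * (1/2) ≤ ∏ n ∈ Finset.range N, (1 - a n) := by
      intro N
      rcases le_or_gt N₀ N with h | h
      · rw [← Finset.prod_range_mul_prod_Ico _ h]
        refine mul_le_mul_of_nonneg_left ?_ hP₀pos.le
        calc (1:ℝ)/2 ≤ 1 - ∑ n ∈ Finset.Ico N₀ N, a n := by linarith [htail N h]
          _ ≤ _ := by
            have := one_sub_sum_le_prod a h0 (fun n => (h1 n).le) (Finset.Ico N₀ N)
            exact this
      · have hsplit : ∏ n ∈ Finset.range N₀, (1 - a n)
            = (∏ n ∈ Finset.range N, (1 - a n)) * ∏ n ∈ Finset.Ico N N₀, (1 - a n) :=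
          (Finset.prod_range_mul_prod_Ico _ h.le).symm
        have h2 : ∏ n ∈ Finset.Ico N N₀, (1 - a n) ≤ 1 :=
          Finset.prod_le_one (fun n _ => by linarith [h1 n]) (fun n _ => by linarith [h0 n])
        have h3 : 0 ≤ ∏ n ∈ Finset.range N, (1 - a n) :=
          Finset.prod_nonneg fun n _ => by linarith [h1 n]
        nlinarith
    have : P₀ * (1/2) ≤ (⨅ N : ℕ, ∏ n ∈ Finset.range N, (1 - a n)) :=
      le_ciInf hlow
    rw [hz] at this
    nlinarith
  · -- not summable → iInf = 0
    intro hns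
    have htend := (not_summable_iff_tendsto_nat_atTop_of_nonneg h0).1 hns
    refine le_antisymm ?_ (le_ciInf fun N => Finset.prod_nonneg fun n _ => by linarith [h1 n])
    refine le_of_forall_pos_le_add fun ε hε => ?_
    obtain ⟨N, hN⟩ := (htend.eventually_ge_atTop (-(Real.log ε))).exists
    have : ∏ n ∈ Finset.range N, (1 - a n) ≤ ε := by
      calc ∏ n ∈ Finset.range N, (1 - a n)
          ≤ Real.exp (-(∑ n ∈ Finset.range N, a n)) :=
            prod_le_exp_neg_sum a h0 (fun n => (h1 n).le) _
        _ ≤ Real.exp (Real.log ε) := Real.exp_le_exp.2 (by linarith)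
        _ = ε := Real.exp_log hε
    calc (⨅ N : ℕ, ∏ n ∈ Finset.range N, (1 - a n)) ≤ _ := ciInf_le hbdd N
      _ ≤ 0 + ε := by linarith

/-- Example 2, annealed: Consider the Markov chain on `S = {2,3,4,…}`
with `p (n, n+1) = 1/n` and `p (n, n) = 1 − 1/n`, started at `2`, in the annealed
problem where each visit to `n` is trapped independently with probability `q n`.

(a) Conditional on reaching site `n` untrapped, the chain survives its (geometric)
sojourn at `n` with probability
`∑_k ((1 − 1/n) (1 − q n))ᵏ ⋅ (1/n) (1 − q n) = 1 − n q n / (n q n + 1 − q n)`,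
i.e. the annealed field traps it during the sojourn with probability
`n q n / (n q n + 1 − q n)`.

(b) Since the sojourns are traversed in order and trapped independently, the total
survival probability is `∏_{n ≥ 2} (1 − n q n / (n q n + 1 − q n))` (realised as the
infimum of the partial products), and the annealed field is trapping (this product is
`0`, i.e. the trapping probability is `1`) if and only if `∑_n n q n = ∞`. -/
theorem example2_annealed
    (q : ℕ → ℝ) (hq : ∀ n, 0 ≤ q n ∧ q n < 1) :
    (∀ n : ℕ, 2 ≤ n →
      (∑' k : ℕ, ((1 - 1 / (n : ℝ)) * (1 - q n)) ^ k * ((1 / (n : ℝ)) * (1 - q n)))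
        = 1 - (n : ℝ) * q n / ((n : ℝ) * q n + 1 - q n)) ∧
    ((⨅ N : ℕ, ∏ n ∈ Finset.range N,
        (1 - ((n + 2 : ℝ) * q (n + 2)
          / ((n + 2 : ℝ) * q (n + 2) + 1 - q (n + 2))))) = 0
      ↔ (∑' n : ℕ, ENNReal.ofReal ((n + 2 : ℝ) * q (n + 2))) = ⊤) := by
  constructor
  · intro n hn
    obtain ⟨hq0, hq1⟩ := hq n
    have hn0 : (0:ℝ) < n := by positivity
    have hn2 : (2:ℝ) ≤ n := by exact_mod_cast hn
    have h1n : 1/(n:ℝ) ≤ 1/2 := by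
      apply one_div_le_one_div_of_le <;> linarith
    have h1n0 : 0 < 1/(n:ℝ) := by positivity
    set r := (1 - 1/(n:ℝ)) * (1 - q n) with hr
    have hr0 : 0 ≤ r := by
      apply mul_nonneg <;> linarith
    have hr1 : r < 1 := by
      have : (1 - 1/(n:ℝ)) < 1 := by linarith
      nlinarith
    rw [tsum_mul_right, tsum_geometric_of_lt_one hr0 hr1]
    have hden : (0:ℝ) < (n:ℝ) * q n + 1 - q n := by nlinarith
    have hr1' : (0:ℝ) < 1 - r := by linarith
    have hne1 : (n:ℝ) ≠ 0 := ne_of_gt hn0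
    have hne2 : (n:ℝ) * q n + 1 - q n ≠ 0 := ne_of_gt hden
    have hne3 : 1 - (1 - 1/(n:ℝ)) * (1 - q n) ≠ 0 := by rw [← hr]; exact ne_of_gt hr1'
    have hR : 1 - (n:ℝ) * q n / ((n:ℝ) * q n + 1 - q n)
        = (1 - q n) / ((n:ℝ) * q n + 1 - q n) := by
      field_simp
      ring
    have hL : 1 - r = (1/(n:ℝ)) * ((n:ℝ) * q n + 1 - q n) := by
      rw [hr]; field_simp; ring
    rw [hR, hL, mul_inv]
    rw [one_div, inv_inv]
    field_simp
  · -- part (b)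
    set x : ℕ → ℝ := fun n => (n + 2 : ℝ) * q (n + 2) with hx
    set a : ℕ → ℝ := fun n => x n / (x n + 1 - q (n + 2)) with ha
    have hx0 : ∀ n, 0 ≤ x n := fun n => by
      have := (hq (n+2)).1; positivity
    have hden : ∀ n, 0 < x n + 1 - q (n + 2) := fun n => by
      have := (hq (n+2)).1; have := (hq (n+2)).2; have := hx0 n; linarith
    have ha0 : ∀ n, 0 ≤ a n := fun n => div_nonneg (hx0 n) (by linarith [hden n])
    have ha1 : ∀ n, a n < 1 := fun n => by
      rw [ha, div_lt_one (by linarith [hden n])]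
      have := (hq (n+2)).2; linarith
    have key : (⨅ N : ℕ, ∏ n ∈ Finset.range N, (1 - a n)) = 0 ↔ ¬ Summable a :=
      iInf_prod_eq_zero_iff a ha0 ha1
    have hsumiff : Summable a ↔ Summable x := by
      constructor
      · intro hs
        have hten : Filter.Tendsto a Filter.atTop (nhds 0) := hs.tendsto_atTop_zero
        have hev : ∀ᶠ n in Filter.atTop, a n ≤ 1/2 := by
          have := hten.eventually (eventually_le_nhds (show (0:ℝ) < 1/2 by norm_num))
          exact this
        obtain ⟨N₀, hN₀⟩ := Filter.eventually_atTop.1 hev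
        have hb : ∀ n ≥ N₀, x n ≤ 2 * a n := by
          intro n hn
          have h2 := hN₀ n hn
          have hd := hden n
          have hq2 := (hq (n+2)).2
          have hxn := hx0 n
          have h2' : x n / (x n + 1 - q (n+2)) ≤ 1/2 := h2
          rw [div_le_iff₀ hd] at h2'
          have hxc : x n ≤ 1 - q (n+2) := by linarith
          have hgoal : x n ≤ 2 * (x n / (x n + 1 - q (n+2))) := by
            rw [← mul_div_assoc, le_div_iff₀ hd]
            have hq1 := (hq (n+2)).1
            nlinarith
          exact hgoal
        rw [← summable_nat_add_iff N₀]
        refine Summable.of_nonneg_of_le (fun n => hx0 _) (fun n => hb _ (Nat.le_add_left _ _)) ?_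
        exact ((summable_nat_add_iff N₀).2 hs).mul_left 2
      · intro hs
        have hten : Filter.Tendsto x Filter.atTop (nhds 0) := hs.tendsto_atTop_zero
        have hev : ∀ᶠ n in Filter.atTop, x n ≤ 1 := by
          exact hten.eventually (eventually_le_nhds (show (0:ℝ) < 1 by norm_num))
        obtain ⟨N₀, hN₀⟩ := Filter.eventually_atTop.1 hev
        have hb : ∀ n ≥ N₀, a n ≤ 2 * x n := by
          intro n hn
          have h2 := hN₀ n hn
          have hd := hden n
          have hq1 := (hq (n+2)).1
          have hxn := hx0 n
          have h2' : ((n:ℝ) + 2) * q (n+2) ≤ 1 := h2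
          have hqsmall : q (n+2) ≤ 1/2 := by
            have hn2 : (0:ℝ) ≤ (n:ℝ) := Nat.cast_nonneg n
            nlinarith
          have hgoal : x n / (x n + 1 - q (n+2)) ≤ 2 * x n := by
            rw [div_le_iff₀ hd]
            nlinarith
          exact hgoal
        rw [← summable_nat_add_iff N₀]
        refine Summable.of_nonneg_of_le (fun n => ha0 _) (fun n => hb _ (Nat.le_add_left _ _)) ?_
        exact ((summable_nat_add_iff N₀).2 hs).mul_left 2
    rw [key, hsumiff]
    constructor
    · intro hns
      by_contra h
      have h' : (∑' n, ((x n).toNNReal : ℝ≥0∞)) ≠ ⊤ := by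
        simpa [ENNReal.ofReal] using h
      have hsum := ENNReal.tsum_coe_ne_top_iff_summable.1 h'
      have : Summable x :=
        (NNReal.summable_coe.2 hsum).congr (fun n => Real.coe_toNNReal _ (hx0 n))
      exact hns this
    · intro htop hsx
      rw [← ENNReal.ofReal_tsum_of_nonneg hx0 hsx] at htop
      exact ENNReal.ofReal_ne_top htop
end

section
/- For the chain on S = {2,3,...} with p(n,n+1)=1/n, p(n,n)=1−1/n, the quenched field is trapping if and only if Σ_n q(n) = ∞. In particular, if Σ_n q(n) < ∞ but Σ_n n·q(n) = ∞ (e.g. q(n) = 1/(n log^2 n)), the quenched field is non-trapping while the annealed field is trapping, so Theorem 1 fails without the bounded Green's function hypothesis. -/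
open ENNReal Finset
open Filter

private lemma summable_of_tail_le {a b : ℕ → ℝ} (hb : Summable b) (h0 : ∀ n, 0 ≤ a n)
    (M : ℕ) (h : ∀ n, M ≤ n → a n ≤ b n) : Summable a := by
  rw [← summable_nat_add_iff M]
  exact Summable.of_nonneg_of_le (fun n => h0 _)
    (fun n => h _ (Nat.le_add_left M n)) ((summable_nat_add_iff M).2 hb)

private lemma ofReal_tsum_top_iff {a : ℕ → ℝ} (h0 : ∀ n, 0 ≤ a n) :
    (∑' n, ENNReal.ofReal (a n)) = ⊤ ↔ ¬ Summable a := by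
  constructor
  · intro ht hs
    rw [← ENNReal.ofReal_tsum_of_nonneg h0 hs] at ht
    exact ENNReal.ofReal_ne_top ht
  · intro hs
    by_contra ht
    apply hs
    have : Summable fun n => ((a n).toNNReal : ℝ) :=
      NNReal.summable_coe.2 (ENNReal.tsum_coe_ne_top_iff_summable.1 ht)
    refine this.congr fun n => ?_
    exact Real.coe_toNNReal _ (h0 n)

private lemma inf_prod_eq_zero_iff (a : ℕ → ℝ) (ha : ∀ n, 0 ≤ a n ∧ a n < 1) :
    (⨅ N : ℕ, ∏ n ∈ Finset.range N, (1 - a n)) = 0 ↔ ¬ Summable a := by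
  have hpos : ∀ n, 0 < 1 - a n := fun n => by linarith [(ha n).2]
  have hP0 : ∀ N, 0 ≤ ∏ n ∈ Finset.range N, (1 - a n) := fun N =>
    Finset.prod_nonneg fun n _ => (hpos n).le
  constructor
  · intro h hs
    -- summable → inf > 0, contradiction
    set b : ℕ → ℝ := fun n => a n / (1 - a n) with hb
    have hb0 : ∀ n, 0 ≤ b n := fun n => div_nonneg (ha n).1 (hpos n).le
    have hbs : Summable b := by
      have h2 : ∀ᶠ n in atTop, a n ≤ 1/2 := hs.tendsto_atTop_zero.eventually_le_const (by norm_num)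
      obtain ⟨M, hM⟩ := h2.exists_forall_of_atTop
      refine summable_of_tail_le (hs.mul_left 2) hb0 M fun n hn => ?_
      have h1 : (1:ℝ)/2 ≤ 1 - a n := by linarith [hM n hn]
      rw [div_le_iff₀ (hpos n)]
      nlinarith [(ha n).1]
    have key : ∀ N, Real.exp (-(∑' n, b n)) ≤ ∏ n ∈ Finset.range N, (1 - a n) := by
      intro N
      have h1 : Real.exp (-(∑' n, b n)) ≤ Real.exp (-(∑ n ∈ Finset.range N, b n)) := by
        apply Real.exp_le_exp.2
        simp only [neg_le_neg_iff]
        exact Summable.sum_le_tsum _ (fun n _ => hb0 n) hbs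
      refine h1.trans ?_
      rw [← Finset.sum_neg_distrib, Real.exp_sum]
      apply Finset.prod_le_prod (fun n _ => (Real.exp_pos _).le)
      intro n _
      -- exp (-(a/(1-a))) ≤ 1 - a
      have := Real.add_one_le_exp (b n)
      have h2 : Real.exp (-(b n)) ≤ 1 / (1 + b n) := by
        rw [Real.exp_neg, inv_eq_one_div, div_le_div_iff₀ (Real.exp_pos _) (by linarith [hb0 n])]
        linarith
      refine h2.trans ?_
      have heq : 1 + b n = 1 / (1 - a n) := by
        rw [hb, eq_div_iff (hpos n).ne', add_mul, div_mul_cancel₀ _ (hpos n).ne']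
        ring
      rw [heq, one_div_one_div]
    have : Real.exp (-(∑' n, b n)) ≤ 0 := h ▸ le_ciInf key
    exact absurd this (not_le.2 (Real.exp_pos _))
  · intro hs
    refine le_antisymm ?_ (le_ciInf hP0)
    have htend : Tendsto (fun N => ∑ n ∈ Finset.range N, a n) atTop atTop :=
      (not_summable_iff_tendsto_nat_atTop_of_nonneg fun n => (ha n).1).1 hs
    have h2 : Tendsto (fun N => Real.exp (-(∑ n ∈ Finset.range N, a n))) atTop (nhds 0) :=
      Real.tendsto_exp_neg_atTop_nhds_zero.comp htend
    refine ge_of_tendsto h2 (Eventually.of_forall fun N => ?_)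
    refine (ciInf_le ⟨0, fun x ⟨N, hN⟩ => hN ▸ hP0 N⟩ N).trans ?_
    rw [← Finset.sum_neg_distrib, Real.exp_sum]
    exact Finset.prod_le_prod (fun n _ => (hpos n).le)
      (fun n _ => by linarith [Real.add_one_le_exp (-a n)])

/-- Example 2, quenched: For the chain on `S = {2,3,…}` with
`p (n, n+1) = 1/n`, `p (n, n) = 1 − 1/n`, started at `2`, each site `n` visited is a
(quenched) trap with probability `q n` fixed forever, so the probability of never
being trapped is `∏_{n ≥ 2} (1 − q n)` (realised as the infimum of partial products):
the quenched field is trapping iff this product is `0`, iff `∑_n q n = ∞`.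

In particular, if `∑_n q n < ∞` but `∑_n n q n = ∞`, the quenched field is
non-trapping (the quenched survival product is positive) while the annealed field is
trapping (the annealed survival product `∏ (1 − n q n / (n q n + 1 − q n))` is `0`);
so Theorem 1 fails without the bounded Green's function hypothesis. -/
theorem example2_quenched
    (q : ℕ → ℝ) (hq : ∀ n, 0 ≤ q n ∧ q n < 1) :
    ((⨅ N : ℕ, ∏ n ∈ Finset.range N, (1 - q (n + 2))) = 0
      ↔ (∑' n : ℕ, ENNReal.ofReal (q (n + 2))) = ⊤) ∧
    (((∑' n : ℕ, ENNReal.ofReal (q (n + 2))) ≠ ⊤ ∧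
        (∑' n : ℕ, ENNReal.ofReal ((n + 2 : ℝ) * q (n + 2))) = ⊤) →
      (⨅ N : ℕ, ∏ n ∈ Finset.range N, (1 - q (n + 2))) ≠ 0 ∧
      (⨅ N : ℕ, ∏ n ∈ Finset.range N,
        (1 - ((n + 2 : ℝ) * q (n + 2)
          / ((n + 2 : ℝ) * q (n + 2) + 1 - q (n + 2))))) = 0) := by
  set a : ℕ → ℝ := fun n => q (n + 2) with ha
  have haq : ∀ n, 0 ≤ a n ∧ a n < 1 := fun n => hq (n + 2)
  have hiff := (inf_prod_eq_zero_iff a haq).trans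
    (ofReal_tsum_top_iff fun n => (haq n).1).symm
  refine ⟨hiff, fun ⟨h1, h2⟩ => ?_⟩
  constructor
  · exact fun h0 => h1 (hiff.1 h0)
  · set c : ℕ → ℝ := fun n => (n + 2 : ℝ) * a n with hc
    have hc0 : ∀ n, 0 ≤ c n := fun n => mul_nonneg (by positivity) (haq n).1
    set r : ℕ → ℝ := fun n => c n / (c n + 1 - a n) with hrdef
    have hD : ∀ n, 0 < c n + 1 - a n := fun n => by
      have := (haq n).2; have := hc0 n; linarith
    have hr : ∀ n, 0 ≤ r n ∧ r n < 1 := by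
      intro n
      refine ⟨div_nonneg (hc0 n) (hD n).le, ?_⟩
      rw [hrdef, div_lt_one (hD n)]
      linarith [(haq n).2]
    have hnc : ¬ Summable c := (ofReal_tsum_top_iff hc0).1 h2
    rw [inf_prod_eq_zero_iff r hr]
    intro hsr
    apply hnc
    have hev : ∀ᶠ n in Filter.atTop, r n ≤ 1/3 :=
      hsr.tendsto_atTop_zero.eventually_le_const (by norm_num)
    obtain ⟨M, hM⟩ := hev.exists_forall_of_atTop
    refine summable_of_tail_le (hsr.mul_left 2) hc0 M fun n hn => ?_
    have hrn := hM n hn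
    have hrval : c n = r n * (c n + 1 - a n) := by
      rw [hrdef, div_mul_cancel₀ _ (hD n).ne']
    have hcn1 : c n ≤ 1 := by
      by_contra hcg
      push_neg at hcg
      have : c n / (c n + 1 - a n) ≥ 1/2 := by
        rw [ge_iff_le, div_le_div_iff₀ (by norm_num) (hD n)]
        nlinarith [(haq n).1, (haq n).2]
      have heq : r n = c n / (c n + 1 - a n) := rfl
      rw [← heq] at this
      linarith
    have : c n + 1 - a n ≤ 2 := by linarith [(haq n).1]
    calc c n = r n * (c n + 1 - a n) := hrval
      _ ≤ r n * 2 := by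
          exact mul_le_mul_of_nonneg_left this (hr n).1
      _ = 2 * r n := mul_comm _ _
end
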